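/- arXiv:2501.17135 — 4 statements merged into one kernel-verified Lean document; each statement's English description precedes it below -/
import Mathlib

section
/- Let Δ be a connected graph with a spanning tree set S ⊆ E_Δ, and let φ : Γ → Δ be a covering. Then there exists a proper lift Λ of Δ in Γ that contains an edge set mapped by φ bijectively onto S (a lift of S) whose endpoints are the interior vertices of Λ. -/
namespace VG

/-- A graph (directed multigraph): vertices, edges, initial and terminal endpoint maps. -/
structure MGraph : Type 1 where
  V : Type
  E : Type
  ι : E → V
  τ : E → V

/-- A homomorphism of graphs. -/
structure Hom (Γ Δ : MGraph) where
  onV : Γ.V → Δ.V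
  onE : Γ.E → Δ.E
  map_ι : ∀ e, Δ.ι (onE e) = onV (Γ.ι e)
  map_τ : ∀ e, Δ.τ (onE e) = onV (Γ.τ e)

/-- Composition of homomorphisms. -/
def Hom.comp {Γ₁ Γ₂ Γ₃ : MGraph} (g : Hom Γ₂ Γ₃) (f : Hom Γ₁ Γ₂) : Hom Γ₁ Γ₃ where
  onV := g.onV ∘ f.onV
  onE := g.onE ∘ f.onE
  map_ι e := by simp only [Function.comp_apply]; rw [g.map_ι, f.map_ι]
  map_τ e := by simp only [Function.comp_apply]; rw [g.map_τ, f.map_τ]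

/-- An isomorphism of graphs: a homomorphism bijective on vertices and on edges. -/
structure Iso (Γ Δ : MGraph) where
  onV : Γ.V ≃ Δ.V
  onE : Γ.E ≃ Δ.E
  map_ι : ∀ e, Δ.ι (onE e) = onV (Γ.ι e)
  map_τ : ∀ e, Δ.τ (onE e) = onV (Γ.τ e)

def Iso.toHom {Γ Δ : MGraph} (f : Iso Γ Δ) : Hom Γ Δ :=
  ⟨f.onV, f.onE, f.map_ι, f.map_τ⟩

/-- The automorphisms of a graph. -/
abbrev Aut (Γ : MGraph) := Iso Γ Γ

theorem Iso.ext' {Γ Δ : MGraph} {f g : Iso Γ Δ} (hV : f.onV = g.onV) (hE : f.onE = g.onE) :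
    f = g := by
  cases f; cases g; cases hV; cases hE; rfl

instance (Γ : MGraph) : Group (Aut Γ) where
  one := ⟨Equiv.refl _, Equiv.refl _, fun _ => rfl, fun _ => rfl⟩
  mul g h := ⟨h.onV.trans g.onV, h.onE.trans g.onE,
    fun e => by simp only [Equiv.trans_apply]; rw [g.map_ι, h.map_ι],
    fun e => by simp only [Equiv.trans_apply]; rw [g.map_τ, h.map_τ]⟩
  inv g := ⟨g.onV.symm, g.onE.symm,
    fun e => by
      have h := g.map_ι (g.onE.symm e)
      rw [Equiv.apply_symm_apply] at h
      rw [h, Equiv.symm_apply_apply],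
    fun e => by
      have h := g.map_τ (g.onE.symm e)
      rw [Equiv.apply_symm_apply] at h
      rw [h, Equiv.symm_apply_apply]⟩
  mul_assoc a b c := Iso.ext' (Equiv.ext fun _ => rfl) (Equiv.ext fun _ => rfl)
  one_mul a := Iso.ext' (Equiv.ext fun _ => rfl) (Equiv.ext fun _ => rfl)
  mul_one a := Iso.ext' (Equiv.ext fun _ => rfl) (Equiv.ext fun _ => rfl)
  inv_mul_cancel a :=
    Iso.ext' (Equiv.ext fun x => a.onV.symm_apply_apply x)
      (Equiv.ext fun x => a.onE.symm_apply_apply x)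

theorem Aut.mul_onV {Γ : MGraph} (g h : Aut Γ) (v : Γ.V) : (g * h).onV v = g.onV (h.onV v) := rfl
theorem Aut.mul_onE {Γ : MGraph} (g h : Aut Γ) (e : Γ.E) : (g * h).onE e = g.onE (h.onE e) := rfl
theorem Aut.one_onV {Γ : MGraph} (v : Γ.V) : (1 : Aut Γ).onV v = v := rfl
theorem Aut.inv_onV {Γ : MGraph} (g : Aut Γ) (v : Γ.V) : g⁻¹.onV v = g.onV.symm v := rfl

/-- The outset of a vertex. -/
def Out (Γ : MGraph) (v : Γ.V) : Set Γ.E := {e | Γ.ι e = v}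

/-- The inset of a vertex. -/
def In (Γ : MGraph) (v : Γ.V) : Set Γ.E := {e | Γ.τ e = v}

/-- A covering: a surjective homomorphism restricting to bijections on out-sets and in-sets. -/
structure IsCovering {Γ Δ : MGraph} (φ : Hom Γ Δ) : Prop where
  surjV : Function.Surjective φ.onV
  surjE : Function.Surjective φ.onE
  bijOut : ∀ v : Γ.V, Set.BijOn φ.onE (Out Γ v) (Out Δ (φ.onV v))
  bijIn : ∀ v : Γ.V, Set.BijOn φ.onE (In Γ v) (In Δ (φ.onV v))

/-- The cover group of a covering: automorphisms `g` of `Γ` with `φ ∘ g = φ`. -/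
def coverGroup {Γ Δ : MGraph} (φ : Hom Γ Δ) : Subgroup (Aut Γ) where
  carrier := {g | (∀ v, φ.onV (g.onV v) = φ.onV v) ∧ (∀ e, φ.onE (g.onE e) = φ.onE e)}
  one_mem' := ⟨fun _ => rfl, fun _ => rfl⟩
  mul_mem' := by
    rintro g h ⟨hgV, hgE⟩ ⟨hhV, hhE⟩
    exact ⟨fun v => by rw [Aut.mul_onV, hgV, hhV], fun e => by rw [Aut.mul_onE, hgE, hhE]⟩
  inv_mem' := by
    rintro g ⟨hgV, hgE⟩
    refine ⟨fun v => ?_, fun e => ?_⟩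
    · have h := hgV (g.onV.symm v)
      rw [Equiv.apply_symm_apply] at h
      exact h.symm
    · have h := hgE (g.onE.symm e)
      rw [Equiv.apply_symm_apply] at h
      exact h.symm

theorem mem_coverGroup {Γ Δ : MGraph} {φ : Hom Γ Δ} {g : Aut Γ} :
    g ∈ coverGroup φ ↔ (∀ v, φ.onV (g.onV v) = φ.onV v) ∧ (∀ e, φ.onE (g.onE e) = φ.onE e) :=
  Iff.rfl

/-- A covering is regular if its cover group acts transitively on all fibers
(of vertices and of edges). -/
def IsRegular {Γ Δ : MGraph} (φ : Hom Γ Δ) : Prop :=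
  (∀ v w : Γ.V, φ.onV v = φ.onV w → ∃ g ∈ coverGroup φ, g.onV v = w) ∧
  (∀ e f : Γ.E, φ.onE e = φ.onE f → ∃ g ∈ coverGroup φ, g.onE e = f)

/-- The orbit equivalence on vertices induced by a subgroup of automorphisms. -/
def vSetoid (Γ : MGraph) (G : Subgroup (Aut Γ)) : Setoid Γ.V where
  r v w := ∃ g ∈ G, g.onV v = w
  iseqv := by
    refine ⟨fun v => ⟨1, one_mem _, rfl⟩, ?_, ?_⟩
    · rintro v w ⟨g, hg, rfl⟩
      exact ⟨g⁻¹, inv_mem hg, g.onV.symm_apply_apply v⟩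
    · rintro u v w ⟨g, hg, rfl⟩ ⟨h, hh, rfl⟩
      exact ⟨h * g, mul_mem hh hg, rfl⟩

/-- The orbit equivalence on edges induced by a subgroup of automorphisms. -/
def eSetoid (Γ : MGraph) (G : Subgroup (Aut Γ)) : Setoid Γ.E where
  r e f := ∃ g ∈ G, g.onE e = f
  iseqv := by
    refine ⟨fun e => ⟨1, one_mem _, rfl⟩, ?_, ?_⟩
    · rintro e f ⟨g, hg, rfl⟩
      exact ⟨g⁻¹, inv_mem hg, g.onE.symm_apply_apply e⟩
    · rintro e f d ⟨g, hg, rfl⟩ ⟨h, hh, rfl⟩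
      exact ⟨h * g, mul_mem hh hg, rfl⟩

/-- The quotient graph of `Γ` by a subgroup `G` of automorphisms. -/
def quotientGraph (Γ : MGraph) (G : Subgroup (Aut Γ)) : MGraph where
  V := Quotient (vSetoid Γ G)
  E := Quotient (eSetoid Γ G)
  ι := Quotient.map' Γ.ι (by rintro e f ⟨g, hg, rfl⟩; exact ⟨g, hg, (g.map_ι e).symm⟩)
  τ := Quotient.map' Γ.τ (by rintro e f ⟨g, hg, rfl⟩; exact ⟨g, hg, (g.map_τ e).symm⟩)

/-- The canonical projection of a graph onto its quotient by a subgroup of automorphisms. -/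
def quotientProj (Γ : MGraph) (G : Subgroup (Aut Γ)) : Hom Γ (quotientGraph Γ G) where
  onV := Quotient.mk (vSetoid Γ G)
  onE := Quotient.mk (eSetoid Γ G)
  map_ι e := rfl
  map_τ e := rfl

/-- A subgroup of automorphisms acts freely: nonidentity elements move every vertex. -/
def ActsFreely (Γ : MGraph) (G : Subgroup (Aut Γ)) : Prop :=
  ∀ g ∈ G, g ≠ 1 → ∀ v : Γ.V, g.onV v ≠ v

/-! ### Walks -/

/-- The vertex from which a step (edge together with a direction of traversal) departs. -/
def stepSrc (Γ : MGraph) (s : Γ.E × Bool) : Γ.V := cond s.2 (Γ.ι s.1) (Γ.τ s.1)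

/-- The vertex at which a step arrives. -/
def stepTgt (Γ : MGraph) (s : Γ.E × Bool) : Γ.V := cond s.2 (Γ.τ s.1) (Γ.ι s.1)

/-- A list of steps forms a chain starting at a given vertex. -/
def chain (Γ : MGraph) : Γ.V → List (Γ.E × Bool) → Prop
  | _, [] => True
  | v, s :: rest => stepSrc Γ s = v ∧ chain Γ (stepTgt Γ s) rest

/-- The final vertex after traversing a list of steps from a given vertex. -/
def endOf (Γ : MGraph) : Γ.V → List (Γ.E × Bool) → Γ.V
  | v, [] => v
  | _, s :: rest => endOf Γ (stepTgt Γ s) rest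

/-- A walk: an initial vertex and a compatible list of steps, each traversing an
edge either along (`true`) or against (`false`) its orientation. -/
structure Walk (Γ : MGraph) where
  first : Γ.V
  steps : List (Γ.E × Bool)
  ok : chain Γ first steps

/-- The terminal vertex of a walk. -/
def Walk.last {Γ : MGraph} (w : Walk Γ) : Γ.V := endOf Γ w.first w.steps

/-- Two vertices joined by a walk. -/
def Reachable (Γ : MGraph) (u v : Γ.V) : Prop :=
  ∃ w : Walk Γ, w.first = u ∧ w.last = v

/-- A graph is connected if any two vertices are joined by a walk. -/
def Connected (Γ : MGraph) : Prop :=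
  ∀ u v : Γ.V, Reachable Γ u v

def Hom.mapStep {Γ Δ : MGraph} (φ : Hom Γ Δ) (s : Γ.E × Bool) : Δ.E × Bool := (φ.onE s.1, s.2)

theorem Hom.stepSrc_map {Γ Δ : MGraph} (φ : Hom Γ Δ) (s : Γ.E × Bool) :
    stepSrc Δ (φ.mapStep s) = φ.onV (stepSrc Γ s) := by
  obtain ⟨e, b⟩ := s
  cases b <;> simp [stepSrc, Hom.mapStep, φ.map_ι, φ.map_τ]

theorem Hom.stepTgt_map {Γ Δ : MGraph} (φ : Hom Γ Δ) (s : Γ.E × Bool) :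
    stepTgt Δ (φ.mapStep s) = φ.onV (stepTgt Γ s) := by
  obtain ⟨e, b⟩ := s
  cases b <;> simp [stepTgt, Hom.mapStep, φ.map_ι, φ.map_τ]

theorem Hom.chain_map {Γ Δ : MGraph} (φ : Hom Γ Δ) (l : List (Γ.E × Bool)) (v : Γ.V)
    (h : chain Γ v l) : chain Δ (φ.onV v) (l.map φ.mapStep) := by
  induction l generalizing v with
  | nil => trivial
  | cons s rest ih =>
    exact ⟨by rw [φ.stepSrc_map, h.1], by rw [φ.stepTgt_map]; exact ih _ h.2⟩

/-- The image of a walk under a homomorphism (edge-by-edge, preserving directions). -/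
def Walk.map {Γ Δ : MGraph} (φ : Hom Γ Δ) (w : Walk Γ) : Walk Δ :=
  ⟨φ.onV w.first, w.steps.map φ.mapStep, φ.chain_map w.steps w.first w.ok⟩

theorem endOf_map {Γ Δ : MGraph} (φ : Hom Γ Δ) (l : List (Γ.E × Bool)) (v : Γ.V) :
    endOf Δ (φ.onV v) (l.map φ.mapStep) = φ.onV (endOf Γ v l) := by
  induction l generalizing v with
  | nil => rfl
  | cons s rest ih =>
    show endOf Δ (stepTgt Δ (φ.mapStep s)) (rest.map φ.mapStep) = _
    rw [φ.stepTgt_map]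
    exact ih _

theorem chain_append (Γ : MGraph) (l₁ l₂ : List (Γ.E × Bool)) (v : Γ.V)
    (h₁ : chain Γ v l₁) (h₂ : chain Γ (endOf Γ v l₁) l₂) : chain Γ v (l₁ ++ l₂) := by
  induction l₁ generalizing v with
  | nil => exact h₂
  | cons s rest ih => exact ⟨h₁.1, ih _ h₁.2 h₂⟩

theorem endOf_append (Γ : MGraph) (l₁ l₂ : List (Γ.E × Bool)) (v : Γ.V) :
    endOf Γ v (l₁ ++ l₂) = endOf Γ (endOf Γ v l₁) l₂ := by
  induction l₁ generalizing v with
  | nil => rfl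
  | cons s rest ih => exact ih _

/-- Concatenation of walks. -/
def Walk.append {Γ : MGraph} (w₁ w₂ : Walk Γ) (h : w₁.last = w₂.first) : Walk Γ :=
  ⟨w₁.first, w₁.steps ++ w₂.steps, chain_append Γ _ _ _ w₁.ok (by rw [show endOf Γ w₁.first w₁.steps = w₂.first from h]; exact w₂.ok)⟩

theorem Walk.append_last {Γ : MGraph} (w₁ w₂ : Walk Γ) (h : w₁.last = w₂.first) :
    (w₁.append w₂ h).last = w₂.last := by
  show endOf Γ w₁.first (w₁.steps ++ w₂.steps) = _
  rw [endOf_append, show endOf Γ w₁.first w₁.steps = w₂.first from h]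
  rfl

theorem Reachable.trans {Γ : MGraph} {u v w : Γ.V}
    (h₁ : Reachable Γ u v) (h₂ : Reachable Γ v w) : Reachable Γ u w := by
  obtain ⟨p, hp1, hp2⟩ := h₁
  obtain ⟨q, hq1, hq2⟩ := h₂
  exact ⟨p.append q (by rw [hp2, hq1]), hp1, by rw [Walk.append_last]; exact hq2⟩

/-- A single forward step along an edge, as a walk. -/
def Walk.single {Γ : MGraph} (e : Γ.E) : Walk Γ :=
  ⟨Γ.ι e, [(e, true)], ⟨rfl, trivial⟩⟩

def flipStep {Γ : MGraph} (s : Γ.E × Bool) : Γ.E × Bool := (s.1, !s.2)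

theorem stepSrc_flip (Γ : MGraph) (s : Γ.E × Bool) : stepSrc Γ (flipStep s) = stepTgt Γ s := by
  obtain ⟨e, b⟩ := s; cases b <;> rfl

theorem stepTgt_flip (Γ : MGraph) (s : Γ.E × Bool) : stepTgt Γ (flipStep s) = stepSrc Γ s := by
  obtain ⟨e, b⟩ := s; cases b <;> rfl

theorem endOf_reverse (Γ : MGraph) (l : List (Γ.E × Bool)) (v : Γ.V) (h : chain Γ v l) :
    endOf Γ (endOf Γ v l) (l.reverse.map flipStep) = v := by
  induction l generalizing v with
  | nil => rfl
  | cons s rest ih =>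
    rw [List.reverse_cons, List.map_append]
    show endOf Γ (endOf Γ (stepTgt Γ s) rest) ((rest.reverse.map flipStep) ++ [flipStep s]) = v
    rw [endOf_append, ih _ h.2]
    show stepTgt Γ (flipStep s) = v
    rw [stepTgt_flip]; exact h.1

theorem chain_reverse (Γ : MGraph) (l : List (Γ.E × Bool)) (v : Γ.V) (h : chain Γ v l) :
    chain Γ (endOf Γ v l) (l.reverse.map flipStep) := by
  induction l generalizing v with
  | nil => trivial
  | cons s rest ih =>
    rw [List.reverse_cons, List.map_append]
    show chain Γ (endOf Γ (stepTgt Γ s) rest) _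
    refine chain_append Γ _ _ _ (ih _ h.2) ?_
    rw [endOf_reverse Γ rest _ h.2]
    exact ⟨by rw [stepSrc_flip], trivial⟩

/-- The reversal of a walk. -/
def Walk.reverse {Γ : MGraph} (w : Walk Γ) : Walk Γ :=
  ⟨w.last, w.steps.reverse.map flipStep, chain_reverse Γ w.steps w.first w.ok⟩

theorem Walk.reverse_last {Γ : MGraph} (w : Walk Γ) : w.reverse.last = w.first :=
  endOf_reverse Γ w.steps w.first w.ok

theorem Reachable.refl' (Γ : MGraph) (v : Γ.V) : Reachable Γ v v :=
  ⟨⟨v, [], trivial⟩, rfl, rfl⟩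

theorem Reachable.symm' {Γ : MGraph} {u v : Γ.V} (h : Reachable Γ u v) : Reachable Γ v u := by
  obtain ⟨p, h1, h2⟩ := h
  exact ⟨p.reverse, by rw [show p.reverse.first = p.last from rfl, h2],
    by rw [p.reverse_last, h1]⟩

/-- The connected-component equivalence on vertices. -/
def reachSetoid (Γ : MGraph) : Setoid Γ.V where
  r := Reachable Γ
  iseqv := ⟨Reachable.refl' Γ, Reachable.symm', Reachable.trans⟩

/-! ### Subgraphs, trees, lifts -/

/-- A subgraph of a graph. -/
structure Subgraph (Γ : MGraph) where
  verts : Set Γ.V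
  edges : Set Γ.E
  ι_mem : ∀ e ∈ edges, Γ.ι e ∈ verts
  τ_mem : ∀ e ∈ edges, Γ.τ e ∈ verts

/-- The graph determined by a subgraph. -/
def Subgraph.toMGraph {Γ : MGraph} (H : Subgraph Γ) : MGraph where
  V := ↥H.verts
  E := ↥H.edges
  ι e := ⟨Γ.ι e.1, H.ι_mem e.1 e.2⟩
  τ e := ⟨Γ.τ e.1, H.τ_mem e.1 e.2⟩

/-- The inclusion homomorphism of a subgraph. -/
def Subgraph.incl {Γ : MGraph} (H : Subgraph Γ) : Hom H.toMGraph Γ :=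
  ⟨fun v => v.1, fun e => e.1, fun _ => rfl, fun _ => rfl⟩

/-- The set of endpoints of a set of edges. -/
def endpoints (Γ : MGraph) (S : Set Γ.E) : Set Γ.V := {v | ∃ e ∈ S, Γ.ι e = v ∨ Γ.τ e = v}

/-- The subgraph induced by a set of edges. -/
def edgeInduced (Γ : MGraph) (S : Set Γ.E) : Subgraph Γ where
  verts := endpoints Γ S
  edges := S
  ι_mem e he := ⟨e, he, Or.inl rfl⟩
  τ_mem e he := ⟨e, he, Or.inr rfl⟩

/-- The list of vertices visited when traversing a list of steps from a vertex. -/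
def vertsOf (Γ : MGraph) : Γ.V → List (Γ.E × Bool) → List Γ.V
  | v, [] => [v]
  | v, s :: rest => v :: vertsOf Γ (stepTgt Γ s) rest

/-- A path: a walk with no repeated edge and no repeated vertex
(except possibly the initial and terminal vertex coinciding). -/
def Walk.IsPath {Γ : MGraph} (w : Walk Γ) : Prop :=
  (w.steps.map Prod.fst).Nodup ∧
  (vertsOf Γ w.first w.steps).dropLast.Nodup ∧
  (vertsOf Γ w.first w.steps).tail.Nodup

/-- A cyclic walk: terminal vertex equals initial vertex. -/
def Walk.IsCyclic {Γ : MGraph} (w : Walk Γ) : Prop := w.last = w.first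

/-- A graph is acyclic if it has no nontrivial cyclic path. -/
def Acyclic (Γ : MGraph) : Prop :=
  ¬ ∃ w : Walk Γ, w.steps ≠ [] ∧ w.IsCyclic ∧ w.IsPath

/-- A spanning tree set: an edge set inducing an acyclic connected subgraph
containing all vertices. -/
def IsSpanningTreeSet (Δ : MGraph) (S : Set Δ.E) : Prop :=
  Acyclic (edgeInduced Δ S).toMGraph ∧ Connected (edgeInduced Δ S).toMGraph ∧
  ∀ v : Δ.V, v ∈ endpoints Δ S

/-- A lift of `Δ` with respect to a covering `φ : Γ → Δ`: a connected subgraph of `Γ`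
on whose edges `φ` restricts to a bijection onto the edges of `Δ`. -/
def IsLift {Γ Δ : MGraph} (φ : Hom Γ Δ) (Λ : Subgraph Γ) : Prop :=
  Connected Λ.toMGraph ∧ Set.BijOn φ.onE Λ.edges Set.univ

/-- A proper lift, with designated edge set `S₀` lifting a spanning tree set of `Δ`:
every edge of the lift has its initial endpoint among the endpoints of `S₀`
(the interior vertices). -/
def IsProperLiftWith {Γ Δ : MGraph} (φ : Hom Γ Δ) (Λ : Subgraph Γ) (S₀ : Set Γ.E) : Prop :=
  IsLift φ Λ ∧ S₀ ⊆ Λ.edges ∧ IsSpanningTreeSet Δ (φ.onE '' S₀) ∧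
  ∀ e ∈ Λ.edges, Γ.ι e ∈ endpoints Γ S₀

/-- A proper lift. -/
def IsProperLift {Γ Δ : MGraph} (φ : Hom Γ Δ) (Λ : Subgraph Γ) : Prop :=
  ∃ S₀ : Set Γ.E, IsProperLiftWith φ Λ S₀

/-! ### Voltage graphs -/

/-- The voltage of a walk: the ordered product of the voltages of its edges,
inverted when an edge is traversed against its orientation. -/
def voltage {Δ : MGraph} {G : Type} [Group G] (γ : Δ.E → G) (w : Walk Δ) : G :=
  (w.steps.map fun s => cond s.2 (γ s.1) (γ s.1)⁻¹).prod

/-- The derived graph of a voltage graph `(Δ, γ)`. -/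
def derivedGraph (Δ : MGraph) {G : Type} [Group G] (γ : Δ.E → G) : MGraph where
  V := Δ.V × G
  E := Δ.E × G
  ι e := (Δ.ι e.1, e.2)
  τ e := (Δ.τ e.1, e.2 * γ e.1)

/-- The canonical covering of a derived graph onto its base. -/
def derivedProj (Δ : MGraph) {G : Type} [Group G] (γ : Δ.E → G) : Hom (derivedGraph Δ γ) Δ :=
  ⟨Prod.fst, Prod.fst, fun _ => rfl, fun _ => rfl⟩

/-- Restriction of a voltage assignment to the subgroup generated by its values. -/
def restrictToClosure {G : Type} [Group G] {α : Type} (γ : α → G) :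
    α → Subgroup.closure (Set.range γ) :=
  fun a => ⟨γ a, Subgroup.subset_closure (Set.mem_range_self a)⟩

/-- The connected component of a vertex, as a subgraph. -/
def componentOf (Γ : MGraph) (v : Γ.V) : Subgraph Γ where
  verts := {u | Reachable Γ v u}
  edges := {e | Reachable Γ v (Γ.ι e)}
  ι_mem e he := he
  τ_mem e he := Reachable.trans he ⟨Walk.single e, rfl, rfl⟩

/-- `γ'` is the condensation of `γ` with respect to the spanning tree set `S` and the base
vertex `v₀`: edges of `S` get the identity, and an edge `e ∉ S` gets the voltage of the
return walk of `e` from `v₀` via `S`. -/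
def IsCondensation {Δ : MGraph} {G : Type} [Group G] (γ : Δ.E → G) (S : Set Δ.E)
    (v₀ : Δ.V) (γ' : Δ.E → G) : Prop :=
  (∀ e ∈ S, γ' e = 1) ∧
  ∀ e ∉ S, ∃ p₁ p₂ : Walk Δ,
    p₁.first = v₀ ∧ p₁.last = Δ.ι e ∧ p₂.first = Δ.τ e ∧ p₂.last = v₀ ∧
    p₁.IsPath ∧ p₂.IsPath ∧
    (∀ s ∈ p₁.steps, s.1 ∈ S) ∧ (∀ s ∈ p₂.steps, s.1 ∈ S) ∧
    γ' e = voltage γ p₁ * γ e * voltage γ p₂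

/-- `γ` is the voltage assignment on `Δ` with respect to the proper lift `Λ` (with interior
determined by `S₀`): interior edges of the lift give voltage `1`, and a boundary edge with
terminal endpoint in `g · V_Λ⁰` gives voltage `g`. -/
def IsVoltageWrt {Γ Δ : MGraph} (φ : Hom Γ Δ) (Λ : Subgraph Γ) (S₀ : Set Γ.E)
    (γ : Δ.E → Aut Γ) : Prop :=
  (∀ eΔ : Δ.E, γ eΔ ∈ coverGroup φ) ∧
  ∀ e ∈ Λ.edges,
    (Γ.τ e ∈ endpoints Γ S₀ → γ (φ.onE e) = 1) ∧
    (Γ.τ e ∉ endpoints Γ S₀ → Γ.τ e ∈ (γ (φ.onE e)).onV '' endpoints Γ S₀)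

/-- A good covering of a voltage graph: every cyclic walk of trivial voltage lifts
only to cyclic walks. -/
def IsGoodCovering {Δ Δtop : MGraph} {G : Type} [Group G] (γ : Δ.E → G)
    (μ : Hom Δtop Δ) : Prop :=
  ∀ p : Walk Δ, p.IsCyclic → voltage γ p = 1 →
    ∀ q : Walk Δtop, Walk.map μ q = p → q.IsCyclic

/-! ### Product graphs and common covers -/

/-- The product of two graphs. -/
def prodGraph (Δ₁ Δ₂ : MGraph) : MGraph where
  V := Δ₁.V × Δ₂.V
  E := Δ₁.E × Δ₂.E
  ι e := (Δ₁.ι e.1, Δ₂.ι e.2)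
  τ e := (Δ₁.τ e.1, Δ₂.τ e.2)

/-- First coordinate projection from a subgraph of a product graph. -/
def sgProj₁ {Δ₁ Δ₂ : MGraph} (H : Subgraph (prodGraph Δ₁ Δ₂)) : Hom H.toMGraph Δ₁ where
  onV v := (v.1 : Δ₁.V × Δ₂.V).1
  onE e := (e.1 : Δ₁.E × Δ₂.E).1
  map_ι e := rfl
  map_τ e := rfl

/-- Second coordinate projection from a subgraph of a product graph. -/
def sgProj₂ {Δ₁ Δ₂ : MGraph} (H : Subgraph (prodGraph Δ₁ Δ₂)) : Hom H.toMGraph Δ₂ where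
  onV v := (v.1 : Δ₁.V × Δ₂.V).2
  onE e := (e.1 : Δ₁.E × Δ₂.E).2
  map_ι e := rfl
  map_τ e := rfl

/-- A good common cover of two voltage graphs: a connected subgraph of the product graph
whose coordinate projections are coverings, each a good covering of the respective
voltage graph. -/
def IsGoodCommonCover {Δ₁ Δ₂ : MGraph} {K₁ K₂ : Type} [Group K₁] [Group K₂]
    (γ₁ : Δ₁.E → K₁) (γ₂ : Δ₂.E → K₂) (H : Subgraph (prodGraph Δ₁ Δ₂)) : Prop :=
  Connected H.toMGraph ∧
  IsCovering (sgProj₁ H) ∧ IsCovering (sgProj₂ H) ∧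
  IsGoodCovering γ₁ (sgProj₁ H) ∧ IsGoodCovering γ₂ (sgProj₂ H)

/-- A successful good common cover: both projections are regular, and there is an
automorphism `α` of the cover fixing a spanning tree set `S_⊤` such that the
correspondence between the condensed lifted voltages (via `α`) extends to a group
isomorphism of the generated voltage groups. -/
def IsSuccessfulGoodCommonCover {Δ₁ Δ₂ : MGraph} {K₁ K₂ : Type} [Group K₁] [Group K₂]
    (γ₁ : Δ₁.E → K₁) (γ₂ : Δ₂.E → K₂) (H : Subgraph (prodGraph Δ₁ Δ₂)) : Prop :=
  IsGoodCommonCover γ₁ γ₂ H ∧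
  IsRegular (sgProj₁ H) ∧ IsRegular (sgProj₂ H) ∧
  ∃ (Stop : Set H.toMGraph.E) (vtop : H.toMGraph.V)
    (γ₁' : H.toMGraph.E → K₁) (γ₂' : H.toMGraph.E → K₂) (α : Aut H.toMGraph),
    IsSpanningTreeSet H.toMGraph Stop ∧
    IsCondensation (fun e => γ₁ ((sgProj₁ H).onE e)) Stop vtop γ₁' ∧
    IsCondensation (fun e => γ₂ ((sgProj₂ H).onE e)) Stop vtop γ₂' ∧
    (∀ e ∈ Stop, α.onE e = e) ∧
    ∃ F : ↥(Subgroup.closure (Set.range γ₁')) ≃* ↥(Subgroup.closure (Set.range γ₂')),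
      ∀ e : H.toMGraph.E, (F (restrictToClosure γ₁' e) : K₂) = γ₂' (α.onE e)

/-- A good common cover with regular projections fails if it is not successful. -/
def FailsAsCommonCover {Δ₁ Δ₂ : MGraph} {K₁ K₂ : Type} [Group K₁] [Group K₂]
    (γ₁ : Δ₁.E → K₁) (γ₂ : Δ₂.E → K₂) (H : Subgraph (prodGraph Δ₁ Δ₂)) : Prop :=
  IsGoodCommonCover γ₁ γ₂ H ∧
  IsRegular (sgProj₁ H) ∧ IsRegular (sgProj₂ H) ∧
  ¬ IsSuccessfulGoodCommonCover γ₁ γ₂ H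



/-! Fix any vertex `w₀` of `Γ`. By Zorn's lemma there is a maximal edge set `s` on which `φ` is
injective with image inside `S`, every edge of which is reachable from `w₀` through `s`. A
covering lifts every step at every vertex, so by maximality the images of the vertices reachable
from `w₀` through `s` form a set of vertices of `Δ` closed under steps along `S`, hence all of
`Δ`; this forces `φ(s) = S`. The remaining edges of `Δ` are then lifted at endpoints of `s`. -/

section ReachIn

variable {Γ : MGraph} {s t : Set Γ.E} {u v x : Γ.V}

def ReachIn (Γ : MGraph) (s : Set Γ.E) (u v : Γ.V) : Prop :=
  ∃ w : Walk Γ, w.first = u ∧ w.last = v ∧ ∀ st ∈ w.steps, st.1 ∈ s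

theorem ReachIn.refl (s : Set Γ.E) (u : Γ.V) : ReachIn Γ s u u :=
  ⟨⟨u, [], trivial⟩, rfl, rfl, by simp⟩

theorem ReachIn.mono (h : s ⊆ t) (hr : ReachIn Γ s u v) : ReachIn Γ t u v := by
  obtain ⟨w, h1, h2, h3⟩ := hr
  exact ⟨w, h1, h2, fun st hst => h (h3 st hst)⟩

theorem ReachIn.trans (h₁ : ReachIn Γ s u v) (h₂ : ReachIn Γ s v x) : ReachIn Γ s u x := by
  obtain ⟨w, rfl, hw, hws⟩ := h₁
  obtain ⟨q, rfl, rfl, hqs⟩ := h₂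
  refine ⟨w.append q hw, rfl, Walk.append_last w q hw, fun st hst => ?_⟩
  rcases List.mem_append.1 hst with h | h
  exacts [hws st h, hqs st h]

theorem ReachIn.symm (h : ReachIn Γ s u v) : ReachIn Γ s v u := by
  obtain ⟨w, rfl, rfl, hws⟩ := h
  refine ⟨w.reverse, rfl, w.reverse_last, fun st hst => ?_⟩
  obtain ⟨st', hst', rfl⟩ := List.mem_map.1 hst
  exact hws st' (List.mem_reverse.1 hst')

theorem ReachIn.of_step (st : Γ.E × Bool) (hst : st.1 ∈ s) :
    ReachIn Γ s (stepSrc Γ st) (stepTgt Γ st) :=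
  ⟨⟨stepSrc Γ st, [st], rfl, trivial⟩, rfl, rfl, by simpa using hst⟩

theorem ReachIn.iota_iff_tau {e : Γ.E} (he : e ∈ s) :
    ReachIn Γ s u (Γ.ι e) ↔ ReachIn Γ s u (Γ.τ e) :=
  ⟨fun h => h.trans (of_step (e, true) he), fun h => h.trans (of_step (e, false) he)⟩

theorem ReachIn.stepSrc_iff {e : Γ.E} (he : e ∈ s) (b : Bool) :
    ReachIn Γ s u (stepSrc Γ (e, b)) ↔ ReachIn Γ s u (Γ.ι e) := by
  cases b
  exacts [(iota_iff_tau he).symm, Iff.rfl]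

theorem stepTgt_mem_endpoints {e : Γ.E} (he : e ∈ s) (b : Bool) :
    stepTgt Γ (e, b) ∈ endpoints Γ s := by
  cases b
  exacts [⟨e, he, Or.inl rfl⟩, ⟨e, he, Or.inr rfl⟩]

theorem ReachIn.mem_of_forall_step_mem {C : Set Γ.V}
    (hC : ∀ st : Γ.E × Bool, st.1 ∈ s → stepSrc Γ st ∈ C → stepTgt Γ st ∈ C)
    (h : ReachIn Γ s u v) (hu : u ∈ C) : v ∈ C := by
  obtain ⟨⟨u, l, hl⟩, rfl, rfl, hls⟩ := h
  induction l generalizing u with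
  | nil => exact hu
  | cons st l ih =>
    exact ih _ hl.2 (hC st (hls st List.mem_cons_self) (hl.1 ▸ hu))
      (fun a ha => hls a (List.mem_cons_of_mem _ ha))

theorem Subgraph.reachIn_of_reachable (H : Subgraph Γ) {x y : H.verts}
    (h : Reachable H.toMGraph x y) : ReachIn Γ H.edges x y := by
  obtain ⟨w, rfl, rfl⟩ := h
  refine ⟨w.map H.incl, rfl, endOf_map H.incl w.steps w.first, fun st hst => ?_⟩
  obtain ⟨st', -, rfl⟩ := List.mem_map.1 hst
  exact st'.1.2

theorem Subgraph.reachable_of_reachIn (H : Subgraph Γ) (hu : u ∈ H.verts) (hv : v ∈ H.verts)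
    (h : ReachIn Γ H.edges u v) : Reachable H.toMGraph ⟨u, hu⟩ ⟨v, hv⟩ := by
  let C : Set Γ.V := {x | ∃ hx : x ∈ H.verts, Reachable H.toMGraph ⟨u, hu⟩ ⟨x, hx⟩}
  suffices v ∈ C from this.2
  refine h.mem_of_forall_step_mem ?_ ⟨hu, Reachable.refl' _ _⟩
  rintro ⟨e, b⟩ he ⟨hx, hr⟩
  let st : H.toMGraph.E × Bool := (⟨e, he⟩, b)
  have hsrc : stepSrc H.toMGraph st = ⟨_, hx⟩ := Subtype.ext (H.incl.stepSrc_map st).symm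
  have htgt : (stepTgt H.toMGraph st).1 = stepTgt Γ (e, b) := (H.incl.stepTgt_map st).symm
  rw [← htgt]
  exact ⟨_, hr.trans ⟨⟨_, [st], hsrc, trivial⟩, rfl, rfl⟩⟩

theorem IsSpanningTreeSet.reachIn {Δ : MGraph} {S : Set Δ.E} (hS : IsSpanningTreeSet Δ S)
    (u v : Δ.V) : ReachIn Δ S u v :=
  (edgeInduced Δ S).reachIn_of_reachable (hS.2.1 ⟨u, hS.2.2 u⟩ ⟨v, hS.2.2 v⟩)

theorem connected_edgeInduced_of_iota_mem {X : Set Γ.V}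
    (hX : ∀ x ∈ X, ∀ y ∈ X, ReachIn Γ t x y) (ht : ∀ e ∈ t, Γ.ι e ∈ X) :
    Connected (edgeInduced Γ t).toMGraph := by
  have hnear : ∀ x ∈ endpoints Γ t, ∃ x' ∈ X, ReachIn Γ t x' x := by
    rintro x ⟨e, he, rfl | rfl⟩
    exacts [⟨_, ht e he, .refl t _⟩, ⟨_, ht e he, .of_step (e, true) he⟩]
  rintro ⟨x, hx⟩ ⟨y, hy⟩
  obtain ⟨x', hx', hxx'⟩ := hnear x hx
  obtain ⟨y', hy', hyy'⟩ := hnear y hy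
  exact (edgeInduced Γ t).reachable_of_reachIn hx hy
    ((hxx'.symm.trans (hX x' hx' y' hy')).trans hyy')

end ReachIn

theorem _root_.Function.LeftInverse.bijOn_range {α β : Type*} {f : α → β} {g : β → α}
    (h : Function.LeftInverse f g) : Set.BijOn f (Set.range g) Set.univ :=
  ⟨Set.mapsTo_univ _ _, h.rightInvOn_range.injOn, fun b _ => ⟨g b, Set.mem_range_self b, h b⟩⟩

theorem Hom.endpoints_image_subset {Γ Δ : MGraph} (φ : Hom Γ Δ) (s : Set Γ.E) :
    endpoints Δ (φ.onE '' s) ⊆ φ.onV '' endpoints Γ s := by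
  rintro v ⟨_, ⟨e, he, rfl⟩, rfl | rfl⟩
  exacts [⟨Γ.ι e, ⟨e, he, Or.inl rfl⟩, (φ.map_ι e).symm⟩,
    ⟨Γ.τ e, ⟨e, he, Or.inr rfl⟩, (φ.map_τ e).symm⟩]

section Covering

variable {Γ Δ : MGraph} {φ : Hom Γ Δ} {S : Set Δ.E} {w₀ : Γ.V} {s : Set Γ.E}

theorem IsCovering.exists_lift_step (hφ : IsCovering φ) {w : Γ.V} {st : Δ.E × Bool}
    (h : stepSrc Δ st = φ.onV w) : ∃ st', φ.mapStep st' = st ∧ stepSrc Γ st' = w := by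
  obtain ⟨f, b⟩ := st
  cases b
  · obtain ⟨e, he, rfl⟩ := (hφ.bijIn w).surjOn (show f ∈ In Δ (φ.onV w) from h)
    exact ⟨(e, false), rfl, he⟩
  · obtain ⟨e, he, rfl⟩ := (hφ.bijOut w).surjOn (show f ∈ Out Δ (φ.onV w) from h)
    exact ⟨(e, true), rfl, he⟩

variable (φ S w₀) in
def IsRootedPartialLift (s : Set Γ.E) : Prop :=
  Set.MapsTo φ.onE s S ∧ Set.InjOn φ.onE s ∧ ∀ e ∈ s, ReachIn Γ s w₀ (Γ.ι e)

namespace IsRootedPartialLift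

theorem exists_maximal : ∃ s, Maximal (IsRootedPartialLift φ S w₀) s := by
  refine zorn_subset _ fun c hc hchain =>
    ⟨⋃₀ c, ⟨?_, ?_, ?_⟩, fun t ht => Set.subset_sUnion_of_mem ht⟩
  · rintro e ⟨t, htc, het⟩
    exact (hc htc).1 het
  · rintro e ⟨t, htc, het⟩ e' ⟨t', htc', het'⟩ heq
    rcases hchain.total htc htc' with h | h
    · exact (hc htc').2.1 (h het) het' heq
    · exact (hc htc).2.1 het (h het') heq
  · rintro e ⟨t, htc, het⟩
    exact ((hc htc).2.2 e het).mono (Set.subset_sUnion_of_mem htc)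

theorem reachIn_of_mem_endpoints (hs : IsRootedPartialLift φ S w₀ s) {x : Γ.V}
    (hx : x ∈ endpoints Γ s) : ReachIn Γ s w₀ x := by
  obtain ⟨e, he, rfl | rfl⟩ := hx
  exacts [hs.2.2 e he, (ReachIn.iota_iff_tau he).1 (hs.2.2 e he)]

theorem mem_image_of_maximal (hmax : Maximal (IsRootedPartialLift φ S w₀) s) {e : Γ.E}
    (he : φ.onE e ∈ S) (b : Bool) (hreach : ReachIn Γ s w₀ (stepSrc Γ (e, b))) :
    φ.onE e ∈ φ.onE '' s := by
  by_contra hnew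
  have hes : e ∉ s := fun h => hnew ⟨e, h, rfl⟩
  have hins : IsRootedPartialLift φ S w₀ (insert e s) := by
    refine ⟨?_, (Set.injOn_insert hes).2 ⟨hmax.1.2.1, hnew⟩, ?_⟩
    · rintro e' (rfl | he')
      exacts [he, hmax.1.1 he']
    · rintro e' (rfl | he')
      · exact (ReachIn.stepSrc_iff (Set.mem_insert _ _) b).1
          (hreach.mono (Set.subset_insert _ _))
      · exact (hmax.1.2.2 e' he').mono (Set.subset_insert _ _)
  exact hes (hmax.eq_of_subset hins (Set.subset_insert e s) ▸ Set.mem_insert e s)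

theorem exists_reachIn_of_maximal (hφ : IsCovering φ) (hS : ∀ u v, ReachIn Δ S u v)
    (hmax : Maximal (IsRootedPartialLift φ S w₀) s) (v : Δ.V) :
    ∃ w, φ.onV w = v ∧ ReachIn Γ s w₀ w := by
  refine (hS (φ.onV w₀) v).mem_of_forall_step_mem
    (C := {v | ∃ w, φ.onV w = v ∧ ReachIn Γ s w₀ w}) ?_ ⟨w₀, rfl, .refl s w₀⟩
  rintro st hst ⟨w, hw, hrw⟩
  obtain ⟨⟨e, b⟩, rfl, rfl⟩ := hφ.exists_lift_step hw.symm
  obtain ⟨e', he', hee'⟩ := mem_image_of_maximal hmax hst b hrw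
  refine ⟨stepTgt Γ (e', b), ?_, hmax.1.reachIn_of_mem_endpoints (stepTgt_mem_endpoints he' b)⟩
  rw [← φ.stepTgt_map, Hom.mapStep, hee']
  rfl

theorem image_eq_of_maximal (hφ : IsCovering φ) (hS : ∀ u v, ReachIn Δ S u v)
    (hmax : Maximal (IsRootedPartialLift φ S w₀) s) : φ.onE '' s = S := by
  refine hmax.1.1.image_subset.antisymm fun f hf => ?_
  obtain ⟨w, hw, hrw⟩ := exists_reachIn_of_maximal hφ hS hmax (Δ.ι f)
  obtain ⟨⟨e, b⟩, he, rfl⟩ := hφ.exists_lift_step (st := (f, true)) hw.symm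
  simp only [Hom.mapStep, Prod.mk.injEq] at he
  obtain ⟨rfl, rfl⟩ := he
  exact mem_image_of_maximal hmax hf true hrw

end IsRootedPartialLift

theorem IsCovering.exists_connected_lift_of_isSpanningTreeSet (hφ : IsCovering φ)
    (hS : IsSpanningTreeSet Δ S) :
    ∃ s : Set Γ.E, Set.BijOn φ.onE s S ∧
      ∀ x ∈ endpoints Γ s, ∀ y ∈ endpoints Γ s, ReachIn Γ s x y := by
  rcases isEmpty_or_nonempty Γ.V with hΓ | hΓ
  · refine ⟨∅, ?_, fun x _ => isEmptyElim x⟩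
    convert Set.bijOn_empty φ.onE
    exact Set.eq_empty_of_forall_notMem fun f _ => isEmptyElim (Γ.ι (hφ.surjE f).choose)
  · obtain ⟨w₀⟩ := hΓ
    obtain ⟨s, hmax⟩ := IsRootedPartialLift.exists_maximal (φ := φ) (S := S) (w₀ := w₀)
    have himg := IsRootedPartialLift.image_eq_of_maximal hφ hS.reachIn hmax
    refine ⟨s, ⟨hmax.1.1, hmax.1.2.1, himg ▸ Set.surjOn_image _ _⟩, fun x hx y hy => ?_⟩
    exact (hmax.1.reachIn_of_mem_endpoints hx).symm.trans (hmax.1.reachIn_of_mem_endpoints hy)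

theorem IsCovering.exists_section_extending (hφ : IsCovering φ) (hs : Set.BijOn φ.onE s S)
    (hS : ∀ v, v ∈ endpoints Δ S) :
    ∃ ch : Δ.E → Γ.E, Function.LeftInverse φ.onE ch ∧
      (∀ f, Γ.ι (ch f) ∈ endpoints Γ s) ∧ s ⊆ Set.range ch := by
  have hlift : ∀ f, ∃ e, φ.onE e = f ∧ Γ.ι e ∈ endpoints Γ s ∧ (f ∈ S → e ∈ s) := by
    intro f
    by_cases hf : f ∈ S
    · obtain ⟨e, he, rfl⟩ := hs.surjOn hf
      exact ⟨e, rfl, ⟨e, he, Or.inl rfl⟩, fun _ => he⟩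
    · obtain ⟨w, hw, hwf⟩ := φ.endpoints_image_subset s (hs.image_eq ▸ hS (Δ.ι f))
      obtain ⟨e, he, rfl⟩ := (hφ.bijOut w).surjOn (show f ∈ Out Δ (φ.onV w) from hwf ▸ rfl)
      exact ⟨e, rfl, (he : Γ.ι e = w) ▸ hw, (absurd · hf)⟩
  choose ch hφch hιch hsch using hlift
  exact ⟨ch, hφch, hιch, fun e he => ⟨φ.onE e, hs.injOn (hsch _ (hs.mapsTo he)) he (hφch _)⟩⟩

end Covering

theorem exists_proper_lift_general {Γ Δ : MGraph}
    (S : Set Δ.E) (hS : IsSpanningTreeSet Δ S)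
    (φ : Hom Γ Δ) (hφ : IsCovering φ) :
    ∃ (Λ : Subgraph Γ) (S₀ : Set Γ.E),
      IsProperLiftWith φ Λ S₀ ∧ Set.BijOn φ.onE S₀ S := by
  obtain ⟨s, hsS, hs_conn⟩ := hφ.exists_connected_lift_of_isSpanningTreeSet hS
  obtain ⟨ch, hφch, hιch, hsch⟩ := hφ.exists_section_extending hsS hS.2.2
  have hι : ∀ e ∈ Set.range ch, Γ.ι e ∈ endpoints Γ s := by
    rintro _ ⟨f, rfl⟩
    exact hιch f
  have hconn : Connected (edgeInduced Γ (Set.range ch)).toMGraph :=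
    connected_edgeInduced_of_iota_mem (fun x hx y hy => (hs_conn x hx y hy).mono hsch) hι
  exact ⟨edgeInduced Γ (Set.range ch), s,
    ⟨⟨hconn, hφch.bijOn_range⟩, hsch, hsS.image_eq ▸ hS, hι⟩, hsS⟩

/-- Given a connected graph `Δ` with spanning tree set `S` and a
covering `φ : Γ → Δ`, there is a proper lift `Λ` of `Δ` in `Γ` containing an edge set
mapped by `φ` bijectively onto `S`, whose endpoints are the interior vertices of `Λ`. -/
theorem exists_proper_lift {Γ Δ : MGraph} (hΔ : Connected Δ)
    (S : Set Δ.E) (hS : IsSpanningTreeSet Δ S)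
    (φ : Hom Γ Δ) (hφ : IsCovering φ) :
    ∃ (Λ : Subgraph Γ) (S₀ : Set Γ.E),
      IsProperLiftWith φ Λ S₀ ∧ Set.BijOn φ.onE S₀ S :=
  exists_proper_lift_general S hS φ hφ

end VG
end

section
/- Let Γ be a connected graph, let Δ₁ and Δ₂ be finite graphs, and let φ_i : Γ → Δ_i (i = 1, 2) be regular coverings. Let Δ_⊤ be the graph whose vertices and edges are the nonempty intersections [x] = [x]₁ ∩ [x]₂ of the G_{φ₁}-orbit [x]₁ and the G_{φ₂}-orbit [x]₂ of vertices and edges x of Γ, with ι([e]) = [ι(e)] and τ([e]) = [τ(e)]. Then the map [x] ↦ (φ₁(x), φ₂(x)) is an isomorphism of Δ_⊤ onto a subgraph of the product graph Δ₁ × Δ₂, and under this isomorphism the coverings μ_i : Δ_⊤ → Δ_i, [x] ↦ [x]_i, become the coordinate projections (φ₁(x), φ₂(x)) ↦ φ_i(x). -/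
namespace VG

/-- The equivalence on vertices whose classes are the intersections
`[v]₁ ∩ [v]₂` of the `G₁`-orbit and the `G₂`-orbit of a vertex. -/
def meetSetoidV (Γ : MGraph) (G₁ G₂ : Subgroup (Aut Γ)) : Setoid Γ.V where
  r v w := (∃ g ∈ G₁, g.onV v = w) ∧ (∃ g ∈ G₂, g.onV v = w)
  iseqv := by
    constructor
    · intro v; exact ⟨⟨1, one_mem _, rfl⟩, ⟨1, one_mem _, rfl⟩⟩
    · rintro v w ⟨⟨g, hg, rfl⟩, ⟨h, hh, hhw⟩⟩
      refine ⟨⟨g⁻¹, inv_mem hg, g.onV.symm_apply_apply v⟩, ⟨h⁻¹, inv_mem hh, ?_⟩⟩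
      rw [← hhw]
      exact h.onV.symm_apply_apply v
    · rintro u v w ⟨⟨g, hg, rfl⟩, ⟨h, hh, hhv⟩⟩ ⟨⟨g', hg', rfl⟩, ⟨h', hh', hh'w⟩⟩
      refine ⟨⟨g' * g, mul_mem hg' hg, rfl⟩, ⟨h' * h, mul_mem hh' hh, ?_⟩⟩
      show h'.onV (h.onV u) = _
      rw [hhv]
      exact hh'w

/-- The analogous equivalence on edges. -/
def meetSetoidE (Γ : MGraph) (G₁ G₂ : Subgroup (Aut Γ)) : Setoid Γ.E where
  r e f := (∃ g ∈ G₁, g.onE e = f) ∧ (∃ g ∈ G₂, g.onE e = f)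
  iseqv := by
    constructor
    · intro e; exact ⟨⟨1, one_mem _, rfl⟩, ⟨1, one_mem _, rfl⟩⟩
    · rintro e f ⟨⟨g, hg, rfl⟩, ⟨h, hh, hhf⟩⟩
      refine ⟨⟨g⁻¹, inv_mem hg, g.onE.symm_apply_apply e⟩, ⟨h⁻¹, inv_mem hh, ?_⟩⟩
      rw [← hhf]
      exact h.onE.symm_apply_apply e
    · rintro e f d ⟨⟨g, hg, rfl⟩, ⟨h, hh, hhf⟩⟩ ⟨⟨g', hg', rfl⟩, ⟨h', hh', hh'd⟩⟩
      refine ⟨⟨g' * g, mul_mem hg' hg, rfl⟩, ⟨h' * h, mul_mem hh' hh, ?_⟩⟩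
      show h'.onE (h.onE e) = _
      rw [hhf]
      exact hh'd

/-- The graph `Δ_⊤` whose vertices and edges are the (nonempty) intersections
`[x] = [x]₁ ∩ [x]₂` of `G₁`- and `G₂`-orbits of vertices and edges of `Γ`,
with `ι [e] = [ι e]` and `τ [e] = [τ e]`. -/
def topGraph (Γ : MGraph) (G₁ G₂ : Subgroup (Aut Γ)) : MGraph where
  V := Quotient (meetSetoidV Γ G₁ G₂)
  E := Quotient (meetSetoidE Γ G₁ G₂)
  ι := Quotient.map' Γ.ι (by
    rintro e f ⟨⟨g, hg, rfl⟩, ⟨h, hh, hhf⟩⟩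
    exact ⟨⟨g, hg, (g.map_ι e).symm⟩, ⟨h, hh, by rw [← hhf]; exact (h.map_ι e).symm⟩⟩)
  τ := Quotient.map' Γ.τ (by
    rintro e f ⟨⟨g, hg, rfl⟩, ⟨h, hh, hhf⟩⟩
    exact ⟨⟨g, hg, (g.map_τ e).symm⟩, ⟨h, hh, by rw [← hhf]; exact (h.map_τ e).symm⟩⟩)

/-- The covering `μ₁ : Δ_⊤ → Δ₁`, `[x] ↦ [x]₁` (with `[x]₁` identified with `φ₁(x)`). -/
def topProj₁ {Γ Δ₁ : MGraph} (φ₁ : Hom Γ Δ₁) (G₂ : Subgroup (Aut Γ)) :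
    Hom (topGraph Γ (coverGroup φ₁) G₂) Δ₁ where
  onV := Quotient.lift φ₁.onV (by rintro v w ⟨⟨g, hg, rfl⟩, -⟩; exact (hg.1 v).symm)
  onE := Quotient.lift φ₁.onE (by rintro e f ⟨⟨g, hg, rfl⟩, -⟩; exact (hg.2 e).symm)
  map_ι := by
    intro e
    induction e using Quotient.ind with
    | _ e => exact φ₁.map_ι e
  map_τ := by
    intro e
    induction e using Quotient.ind with
    | _ e => exact φ₁.map_τ e

/-- The covering `μ₂ : Δ_⊤ → Δ₂`, `[x] ↦ [x]₂` (with `[x]₂` identified with `φ₂(x)`). -/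
def topProj₂ {Γ Δ₂ : MGraph} (φ₂ : Hom Γ Δ₂) (G₁ : Subgroup (Aut Γ)) :
    Hom (topGraph Γ G₁ (coverGroup φ₂)) Δ₂ where
  onV := Quotient.lift φ₂.onV (by rintro v w ⟨-, ⟨g, hg, rfl⟩⟩; exact (hg.1 v).symm)
  onE := Quotient.lift φ₂.onE (by rintro e f ⟨-, ⟨g, hg, rfl⟩⟩; exact (hg.2 e).symm)
  map_ι := by
    intro e
    induction e using Quotient.ind with
    | _ e => exact φ₂.map_ι e
  map_τ := by
    intro e
    induction e using Quotient.ind with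
    | _ e => exact φ₂.map_τ e

/-!
For a regular covering the orbits of the cover group are exactly the fibers of the covering.
Hence the class `[x] = [x]₁ ∩ [x]₂` is the fiber of `x ↦ (φ₁ x, φ₂ x)` through `x`, and `Δ_⊤` is
identified with the image of this homomorphism by the first isomorphism theorem for sets.
-/

section

variable {Γ Δ Δ₁ Δ₂ : MGraph}

theorem IsRegular.exists_coverGroup_onV_eq_iff {φ : Hom Γ Δ} (hφ : IsRegular φ) {v w : Γ.V} :
    (∃ g ∈ coverGroup φ, g.onV v = w) ↔ φ.onV v = φ.onV w := by
  refine ⟨?_, hφ.1 v w⟩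
  rintro ⟨g, hg, rfl⟩
  exact (hg.1 v).symm

theorem IsRegular.exists_coverGroup_onE_eq_iff {φ : Hom Γ Δ} (hφ : IsRegular φ) {e f : Γ.E} :
    (∃ g ∈ coverGroup φ, g.onE e = f) ↔ φ.onE e = φ.onE f := by
  refine ⟨?_, hφ.2 e f⟩
  rintro ⟨g, hg, rfl⟩
  exact (hg.2 e).symm

def Hom.prod (φ₁ : Hom Γ Δ₁) (φ₂ : Hom Γ Δ₂) : Hom Γ (prodGraph Δ₁ Δ₂) where
  onV v := (φ₁.onV v, φ₂.onV v)
  onE e := (φ₁.onE e, φ₂.onE e)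
  map_ι e := Prod.ext (φ₁.map_ι e) (φ₂.map_ι e)
  map_τ e := Prod.ext (φ₁.map_τ e) (φ₂.map_τ e)

def Hom.range (φ : Hom Γ Δ) : Subgraph Δ where
  verts := Set.range φ.onV
  edges := Set.range φ.onE
  ι_mem := by
    rintro _ ⟨e, rfl⟩
    exact ⟨Γ.ι e, (φ.map_ι e).symm⟩
  τ_mem := by
    rintro _ ⟨e, rfl⟩
    exact ⟨Γ.τ e, (φ.map_τ e).symm⟩

variable {φ₁ : Hom Γ Δ₁} {φ₂ : Hom Γ Δ₂}

theorem meetSetoidV_coverGroup_iff (r₁ : IsRegular φ₁) (r₂ : IsRegular φ₂) (v w : Γ.V) :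
    meetSetoidV Γ (coverGroup φ₁) (coverGroup φ₂) v w ↔ Setoid.ker (φ₁.prod φ₂).onV v w :=
  (r₁.exists_coverGroup_onV_eq_iff.and r₂.exists_coverGroup_onV_eq_iff).trans
    ((Setoid.ker_def (f := (φ₁.prod φ₂).onV)).trans Prod.ext_iff).symm

theorem meetSetoidE_coverGroup_iff (r₁ : IsRegular φ₁) (r₂ : IsRegular φ₂) (e f : Γ.E) :
    meetSetoidE Γ (coverGroup φ₁) (coverGroup φ₂) e f ↔ Setoid.ker (φ₁.prod φ₂).onE e f :=
  (r₁.exists_coverGroup_onE_eq_iff.and r₂.exists_coverGroup_onE_eq_iff).trans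
    ((Setoid.ker_def (f := (φ₁.prod φ₂).onE)).trans Prod.ext_iff).symm

noncomputable def topGraphIsoRange (r₁ : IsRegular φ₁) (r₂ : IsRegular φ₂) :
    Iso (topGraph Γ (coverGroup φ₁) (coverGroup φ₂)) (φ₁.prod φ₂).range.toMGraph where
  onV := (Quotient.congrRight (meetSetoidV_coverGroup_iff r₁ r₂)).trans
    (Setoid.quotientKerEquivRange _)
  onE := (Quotient.congrRight (meetSetoidE_coverGroup_iff r₁ r₂)).trans
    (Setoid.quotientKerEquivRange _)
  map_ι := by
    rintro ⟨e⟩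
    exact Subtype.ext ((φ₁.prod φ₂).map_ι e)
  map_τ := by
    rintro ⟨e⟩
    exact Subtype.ext ((φ₁.prod φ₂).map_τ e)

end

theorem topGraph_iso_subgraph_of_prod_general {Γ Δ₁ Δ₂ : MGraph}
    (φ₁ : Hom Γ Δ₁) (φ₂ : Hom Γ Δ₂)
    (r₁ : IsRegular φ₁) (r₂ : IsRegular φ₂) :
    ∃ (H : Subgraph (prodGraph Δ₁ Δ₂))
      (ψ : Iso (topGraph Γ (coverGroup φ₁) (coverGroup φ₂)) H.toMGraph),
      (∀ x : Γ.V,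
        H.incl.onV (ψ.onV (Quotient.mk (meetSetoidV Γ (coverGroup φ₁) (coverGroup φ₂)) x))
          = (φ₁.onV x, φ₂.onV x)) ∧
      (∀ e : Γ.E,
        H.incl.onE (ψ.onE (Quotient.mk (meetSetoidE Γ (coverGroup φ₁) (coverGroup φ₂)) e))
          = (φ₁.onE e, φ₂.onE e)) ∧
      (∀ a, (H.incl.onV (ψ.onV a)).1 = (topProj₁ φ₁ (coverGroup φ₂)).onV a) ∧
      (∀ a, (H.incl.onV (ψ.onV a)).2 = (topProj₂ φ₂ (coverGroup φ₁)).onV a) ∧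
      (∀ e, (H.incl.onE (ψ.onE e)).1 = (topProj₁ φ₁ (coverGroup φ₂)).onE e) ∧
      (∀ e, (H.incl.onE (ψ.onE e)).2 = (topProj₂ φ₂ (coverGroup φ₁)).onE e) := by
  refine ⟨(φ₁.prod φ₂).range, topGraphIsoRange r₁ r₂, fun _ => rfl, fun _ => rfl,
    ?_, ?_, ?_, ?_⟩ <;> rintro ⟨x⟩ <;> rfl

/-- For regular coverings `φᵢ : Γ → Δᵢ` with `Γ` connected and `Δᵢ`
finite, the map `[x] ↦ (φ₁(x), φ₂(x))` is an isomorphism of `Δ_⊤` onto a subgraph of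
the product `Δ₁ × Δ₂`, under which the coverings `μᵢ : Δ_⊤ → Δᵢ` become the coordinate
projections. -/
theorem topGraph_iso_subgraph_of_prod {Γ Δ₁ Δ₂ : MGraph}
    [Finite Δ₁.V] [Finite Δ₁.E] [Finite Δ₂.V] [Finite Δ₂.E]
    (hΓ : Connected Γ)
    (φ₁ : Hom Γ Δ₁) (φ₂ : Hom Γ Δ₂)
    (h₁ : IsCovering φ₁) (h₂ : IsCovering φ₂)
    (r₁ : IsRegular φ₁) (r₂ : IsRegular φ₂) :
    ∃ (H : Subgraph (prodGraph Δ₁ Δ₂))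
      (ψ : Iso (topGraph Γ (coverGroup φ₁) (coverGroup φ₂)) H.toMGraph),
      (∀ x : Γ.V,
        H.incl.onV (ψ.onV (Quotient.mk (meetSetoidV Γ (coverGroup φ₁) (coverGroup φ₂)) x))
          = (φ₁.onV x, φ₂.onV x)) ∧
      (∀ e : Γ.E,
        H.incl.onE (ψ.onE (Quotient.mk (meetSetoidE Γ (coverGroup φ₁) (coverGroup φ₂)) e))
          = (φ₁.onE e, φ₂.onE e)) ∧
      (∀ a, (H.incl.onV (ψ.onV a)).1 = (topProj₁ φ₁ (coverGroup φ₂)).onV a) ∧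
      (∀ a, (H.incl.onV (ψ.onV a)).2 = (topProj₂ φ₂ (coverGroup φ₁)).onV a) ∧
      (∀ e, (H.incl.onE (ψ.onE e)).1 = (topProj₁ φ₁ (coverGroup φ₂)).onE e) ∧
      (∀ e, (H.incl.onE (ψ.onE e)).2 = (topProj₂ φ₂ (coverGroup φ₁)).onE e) :=
  topGraph_iso_subgraph_of_prod_general φ₁ φ₂ r₁ r₂

end VG
end

section
/- Let Δ be a connected graph, let γ : E_Δ → G be a voltage assignment, and let γ' be a condensation of γ with respect to some spanning tree set of Δ and some base vertex. Then the derived graph Δ ×_{γ'} ⟨γ'(E_Δ)⟩ is connected, and Δ ×_{γ'} G is a disjoint union of [G : ⟨γ'(E_Δ)⟩] connected components, each isomorphic to Δ ×_{γ'} ⟨γ'(E_Δ)⟩. -/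
namespace VG

/-! A walk in `Δ ×_γ G` starting at `(u, g)` ends at `(v, g · γ(p))`, where `p` is its projection
to `Δ`, so vertices in one component differ in the second coordinate by an element of
`H = ⟨γ(E_Δ)⟩`. Conversely, if `γ'` is a condensation, each generator `γ'(e)` is the
`γ'`-voltage of the closed walk `p₁ e p₂` at `v₀` (the tree edges carry voltage `1`), so every
element of `H` is the voltage of a closed walk at `v₀`; as `Δ` is connected, `(u, g)` and
`(v, h)` are then joined exactly when `g⁻¹h ∈ H`. The components are thus the translates of
`Δ ×_{γ'} H`, indexed by `G ⧸ H`. -/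

open Subgroup Set

section Voltage

variable {Δ : MGraph} {G : Type} [Group G] (γ : Δ.E → G)

theorem voltage_single (e : Δ.E) : voltage γ (Walk.single e) = γ e := by
  simp [voltage, Walk.single]

theorem voltage_append (w₁ w₂ : Walk Δ) (h : w₁.last = w₂.first) :
    voltage γ (w₁.append w₂ h) = voltage γ w₁ * voltage γ w₂ := by
  simp [voltage, Walk.append]

theorem voltage_reverse (w : Walk Δ) : voltage γ w.reverse = (voltage γ w)⁻¹ := by
  simp only [voltage, Walk.reverse]
  induction w.steps with
  | nil => simp
  | cons s l ih =>
    obtain ⟨e, b⟩ := s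
    cases b <;> simp_all [flipStep]

theorem cond_mem_closure_range (e : Δ.E) (b : Bool) :
    cond b (γ e) (γ e)⁻¹ ∈ closure (range γ) := by
  cases b
  · exact inv_mem (subset_closure (mem_range_self e))
  · exact subset_closure (mem_range_self e)

theorem voltage_mem_closure_range (w : Walk Δ) : voltage γ w ∈ closure (range γ) :=
  list_prod_mem fun _ hx => by
    obtain ⟨s, -, rfl⟩ := List.mem_map.mp hx
    exact cond_mem_closure_range γ s.1 s.2

theorem voltage_eq_one_of_steps_mem {S : Set Δ.E} (hS : ∀ e ∈ S, γ e = 1) (w : Walk Δ)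
    (hw : ∀ s ∈ w.steps, s.1 ∈ S) : voltage γ w = 1 :=
  List.prod_eq_one fun _ hx => by
    obtain ⟨s, hs, rfl⟩ := List.mem_map.mp hx
    cases s.2 <;> simp [hS s.1 (hw s hs)]

theorem coe_voltage_restrictToClosure (w : Walk Δ) :
    ((voltage (restrictToClosure γ) w : closure (range γ)) : G) = voltage γ w := by
  simp only [voltage, Subgroup.val_list_prod, List.map_map]
  congr 1
  refine List.map_congr_left fun ⟨e, b⟩ _ => ?_
  cases b <;> rfl

theorem closure_range_restrictToClosure : closure (range (restrictToClosure γ)) = ⊤ := by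
  convert closure_closure_coe_preimage (k := range γ)
  ext z
  exact ⟨fun ⟨a, ha⟩ => ⟨a, congrArg Subtype.val ha⟩, fun ⟨a, ha⟩ => ⟨a, Subtype.ext ha⟩⟩

end Voltage

section LocalGroup

variable {Δ : MGraph} {G : Type} [Group G] (γ : Δ.E → G)

def localGroup (v₀ : Δ.V) : Subgroup G where
  carrier := {g | ∃ w : Walk Δ, w.first = v₀ ∧ w.last = v₀ ∧ voltage γ w = g}
  one_mem' := ⟨⟨v₀, [], trivial⟩, rfl, rfl, rfl⟩
  mul_mem' := by
    rintro _ _ ⟨p, hp, hp', rfl⟩ ⟨q, hq, hq', rfl⟩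
    exact ⟨p.append q (hp'.trans hq.symm), hp, (Walk.append_last p q _).trans hq',
      voltage_append γ p q _⟩
  inv_mem' := by
    rintro _ ⟨p, hp, hp', rfl⟩
    exact ⟨p.reverse, hp', p.reverse_last.trans hp, voltage_reverse γ p⟩

variable {v₀ : Δ.V}

theorem closure_range_le_localGroup (h : ∀ e, γ e ∈ localGroup γ v₀) :
    closure (range γ) ≤ localGroup γ v₀ :=
  closure_le _ |>.mpr (range_subset_iff.mpr h)

theorem restrictToClosure_mem_localGroup {e : Δ.E} (h : γ e ∈ localGroup γ v₀) :
    restrictToClosure γ e ∈ localGroup (restrictToClosure γ) v₀ := by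
  obtain ⟨w, hw, hw', hγ⟩ := h
  exact ⟨w, hw, hw', Subtype.ext ((coe_voltage_restrictToClosure γ w).trans hγ)⟩

theorem IsCondensation.mem_localGroup {γ γ' : Δ.E → G} {S : Set Δ.E}
    (hcond : IsCondensation γ S v₀ γ') (e : Δ.E) : γ' e ∈ localGroup γ' v₀ := by
  by_cases he : e ∈ S
  · rw [hcond.1 e he]
    exact one_mem _
  obtain ⟨p₁, p₂, hp₁, hp₁', hp₂, hp₂', -, -, hS₁, hS₂, -⟩ := hcond.2 e he
  have hmid₁ : p₁.last = (Walk.single e).first := hp₁'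
  have hmid₂ : (p₁.append (Walk.single e) hmid₁).last = p₂.first :=
    (Walk.append_last _ _ _).trans hp₂.symm
  refine ⟨(p₁.append (Walk.single e) hmid₁).append p₂ hmid₂, hp₁,
    (Walk.append_last _ _ _).trans hp₂', ?_⟩
  rw [voltage_append, voltage_append, voltage_single,
    voltage_eq_one_of_steps_mem γ' hcond.1 p₁ hS₁, voltage_eq_one_of_steps_mem γ' hcond.1 p₂ hS₂,
    one_mul, mul_one]

end LocalGroup

section DerivedGraph

variable {Δ : MGraph} {G : Type} [Group G] (γ : Δ.E → G)

def liftSteps : G → List (Δ.E × Bool) → List ((derivedGraph Δ γ).E × Bool)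
  | _, [] => []
  | g, (e, true) :: rest => ((e, g), true) :: liftSteps (g * γ e) rest
  | g, (e, false) :: rest => ((e, g * (γ e)⁻¹), false) :: liftSteps (g * (γ e)⁻¹) rest

theorem chain_liftSteps :
    ∀ (l : List (Δ.E × Bool)) (v : Δ.V) (g : G), chain Δ v l →
      chain (derivedGraph Δ γ) (v, g) (liftSteps γ g l)
  | [], _, _, _ => trivial
  | (e, true) :: rest, _, g, h =>
    ⟨congrArg (·, g) h.1, chain_liftSteps rest _ _ h.2⟩
  | (e, false) :: rest, _, g, h =>
    ⟨by simpa [stepSrc, derivedGraph] using h.1, chain_liftSteps rest _ _ h.2⟩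

theorem endOf_liftSteps :
    ∀ (l : List (Δ.E × Bool)) (v : Δ.V) (g : G),
      endOf (derivedGraph Δ γ) (v, g) (liftSteps γ g l)
        = (endOf Δ v l, g * (l.map fun s => cond s.2 (γ s.1) (γ s.1)⁻¹).prod)
  | [], _, _ => by simp [endOf, liftSteps]; rfl
  | (e, true) :: rest, _, g => by
    show endOf (derivedGraph Δ γ) (Δ.τ e, g * γ e) (liftSteps γ (g * γ e) rest) = _
    simp [endOf_liftSteps rest, endOf, stepTgt, mul_assoc]; rfl
  | (e, false) :: rest, _, g => by
    show endOf (derivedGraph Δ γ) (Δ.ι e, g * (γ e)⁻¹) (liftSteps γ (g * (γ e)⁻¹) rest) = _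
    simp [endOf_liftSteps rest, endOf, stepTgt, mul_assoc]; rfl

def Walk.lift (w : Walk Δ) (g : G) : Walk (derivedGraph Δ γ) :=
  ⟨(w.first, g), liftSteps γ g w.steps, chain_liftSteps γ w.steps w.first g w.ok⟩

theorem reachable_lift (w : Walk Δ) (g : G) :
    Reachable (derivedGraph Δ γ) (w.first, g) (w.last, g * voltage γ w) :=
  ⟨Walk.lift γ w g, rfl, endOf_liftSteps γ w.steps w.first g⟩

theorem inv_mul_stepTgt_snd (s : (derivedGraph Δ γ).E × Bool) :
    (stepSrc _ s).2⁻¹ * (stepTgt _ s).2 = cond s.2 (γ s.1.1) (γ s.1.1)⁻¹ := by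
  obtain ⟨⟨e, g⟩, b⟩ := s
  cases b <;> simp [stepSrc, stepTgt, derivedGraph]

theorem inv_mul_endOf_snd_mem :
    ∀ (l : List ((derivedGraph Δ γ).E × Bool)) (x : Δ.V × G), chain (derivedGraph Δ γ) x l →
      x.2⁻¹ * (endOf (derivedGraph Δ γ) x l).2 ∈ closure (range γ)
  | [], _, _ => by simp [endOf]
  | s :: rest, x, h => by
    have hs : x.2⁻¹ * (stepTgt _ s).2 ∈ closure (range γ) := by
      rw [← h.1, inv_mul_stepTgt_snd]
      exact cond_mem_closure_range γ _ _
    simpa [endOf, mul_assoc] using mul_mem hs (inv_mul_endOf_snd_mem rest _ h.2)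

theorem Reachable.inv_mul_mem_closure_range {x y : Δ.V × G}
    (h : Reachable (derivedGraph Δ γ) x y) : x.2⁻¹ * y.2 ∈ closure (range γ) := by
  obtain ⟨w, rfl, rfl⟩ := h
  exact inv_mul_endOf_snd_mem γ w.steps w.first w.ok

theorem reachable_derivedGraph_iff {v₀ : Δ.V} (hΔ : Connected Δ)
    (hloc : ∀ e, γ e ∈ localGroup γ v₀) (x y : Δ.V × G) :
    Reachable (derivedGraph Δ γ) x y ↔ x.2⁻¹ * y.2 ∈ closure (range γ) := by
  refine ⟨Reachable.inv_mul_mem_closure_range γ, fun hxy => ?_⟩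
  obtain ⟨q₁, hq₁, hq₁'⟩ := hΔ x.1 v₀
  obtain ⟨q₂, hq₂, hq₂'⟩ := hΔ v₀ y.1
  set c := (voltage γ q₁)⁻¹ * (x.2⁻¹ * y.2) * (voltage γ q₂)⁻¹
  have hc : c ∈ closure (range γ) := mul_mem (mul_mem
    (inv_mem (voltage_mem_closure_range γ q₁)) hxy) (inv_mem (voltage_mem_closure_range γ q₂))
  obtain ⟨p, hp, hp', hpc⟩ := closure_range_le_localGroup γ hloc hc
  -- go from `x` to the base vertex along `q₁`, around `p`, and on to `y` along `q₂`
  have r₁ := reachable_lift γ q₁ x.2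
  have r₂ := reachable_lift γ p (x.2 * voltage γ q₁)
  have r₃ := reachable_lift γ q₂ (x.2 * voltage γ q₁ * voltage γ p)
  rw [hq₁, hq₁'] at r₁
  rw [hp, hp', hpc] at r₂
  rw [hq₂, hq₂', hpc, show x.2 * voltage γ q₁ * c * voltage γ q₂ = y.2 by simp only [c]; group]
    at r₃
  exact (r₁.trans r₂).trans r₃

def prodLeftCosetEquiv {A : Type} (H : Subgroup G) (g : G) (s : Set (A × G))
    (hs : ∀ y, y ∈ s ↔ g⁻¹ * y.2 ∈ H) : s ≃ A × H where
  toFun y := (y.1.1, ⟨g⁻¹ * y.1.2, (hs _).mp y.2⟩)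
  invFun z := ⟨(z.1, g * z.2), (hs _).mpr (by simp)⟩
  left_inv y := by ext <;> simp
  right_inv z := by ext <;> simp

def componentIsoDerivedGraph (x : Δ.V × G)
    (hreach : ∀ y, Reachable (derivedGraph Δ γ) x y ↔ x.2⁻¹ * y.2 ∈ closure (range γ)) :
    Iso (componentOf (derivedGraph Δ γ) x).toMGraph (derivedGraph Δ (restrictToClosure γ)) where
  onV := prodLeftCosetEquiv _ x.2 _ hreach
  onE := prodLeftCosetEquiv _ x.2 _ fun e => hreach ((derivedGraph Δ γ).ι e)
  map_ι _ := rfl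
  map_τ _ := Prod.ext rfl (Subtype.ext (mul_assoc _ _ _))

noncomputable def quotientReachSetoidEquiv [Nonempty Δ.V]
    (hreach : ∀ x y, Reachable (derivedGraph Δ γ) x y ↔ x.2⁻¹ * y.2 ∈ closure (range γ)) :
    Quotient (reachSetoid (derivedGraph Δ γ)) ≃ G ⧸ closure (range γ) :=
  (Quotient.congrRight fun x y => (hreach x y).trans QuotientGroup.eq.symm).trans
    (Setoid.quotientKerEquivOfSurjective (fun y : Δ.V × G => (y.2 : G ⧸ closure (range γ)))
      fun q =>
        let ⟨g, hg⟩ := QuotientGroup.mk_surjective q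
        ⟨(Classical.arbitrary Δ.V, g), hg⟩)

end DerivedGraph

theorem condensation_derived_components_general {Δ : MGraph} {G : Type} [Group G]
    (γ γ' : Δ.E → G) (hΔ : Connected Δ)
    (S : Set Δ.E) (v₀ : Δ.V)
    (hcond : IsCondensation γ S v₀ γ') :
    Connected (derivedGraph Δ (restrictToClosure γ')) ∧
    (∀ x : (derivedGraph Δ γ').V,
      Nonempty (Iso (componentOf (derivedGraph Δ γ') x).toMGraph
        (derivedGraph Δ (restrictToClosure γ')))) ∧
    Nonempty (Quotient (reachSetoid (derivedGraph Δ γ')) ≃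
      G ⧸ Subgroup.closure (Set.range γ')) := by
  have hloc := hcond.mem_localGroup
  have hreach := reachable_derivedGraph_iff γ' hΔ hloc
  have : Nonempty Δ.V := ⟨v₀⟩
  refine ⟨fun x y => ?_, fun x => ⟨componentIsoDerivedGraph γ' x (hreach x)⟩,
    ⟨quotientReachSetoidEquiv γ' hreach⟩⟩
  refine (reachable_derivedGraph_iff _ hΔ
    (fun e => restrictToClosure_mem_localGroup γ' (hloc e)) x y).mpr ?_
  rw [closure_range_restrictToClosure]
  exact mem_top _

/-- Let `Δ` be connected, `γ : E_Δ → G` a voltage assignment and `γ'`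
a condensation of `γ` (w.r.t. a spanning tree set `S` and base vertex `v₀`).  Then
`Δ ×_{γ'} ⟨γ'(E_Δ)⟩` is connected, every connected component of `Δ ×_{γ'} G` is
isomorphic to `Δ ×_{γ'} ⟨γ'(E_Δ)⟩`, and the set of components is in bijection with
the coset space `G/⟨γ'(E_Δ)⟩` (so there are `[G : ⟨γ'(E_Δ)⟩]` of them). -/
theorem condensation_derived_components {Δ : MGraph} {G : Type} [Group G]
    (γ γ' : Δ.E → G) (hΔ : Connected Δ)
    (S : Set Δ.E) (hS : IsSpanningTreeSet Δ S) (v₀ : Δ.V)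
    (hcond : IsCondensation γ S v₀ γ') :
    Connected (derivedGraph Δ (restrictToClosure γ')) ∧
    (∀ x : (derivedGraph Δ γ').V,
      Nonempty (Iso (componentOf (derivedGraph Δ γ') x).toMGraph
        (derivedGraph Δ (restrictToClosure γ')))) ∧
    Nonempty (Quotient (reachSetoid (derivedGraph Δ γ')) ≃
      G ⧸ Subgroup.closure (Set.range γ')) :=
  condensation_derived_components_general γ γ' hΔ S v₀ hcond

end VG
end

section
/- Let (Δ, γ) be a connected voltage graph and let G = ⟨γ(E_Δ)⟩ be the group generated by the voltages assigned to Δ. For any connected component Γ₀ of the derived graph Δ ×_γ G, any spanning tree set S of Δ, and any base vertex v₀ of Δ, the condensation γ_S of γ satisfies Γ₀ ≅ Δ ×_{γ_S} ⟨γ_S(E_Δ)⟩. -/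
/-!
Let `f w` be the voltage of a walk from `v₀` to `w` inside the spanning tree. Closed walks in an
acyclic graph have trivial voltage, so `f` is well defined and the condensation is the switch
`γ_S e = f (ι e) * γ e * (f (τ e))⁻¹`. Switching, `(v, g) ↦ (v, g * (f v)⁻¹)`, is an isomorphism
`Δ ×_γ G ≅ Δ ×_{γ_S} G`, so it maps components to components. As `γ_S` is trivial on the tree,
any two vertices of `Δ` are joined by a walk of trivial `γ_S`-voltage; hence the component of
`(v, g)` is `{(w, g * h) | h ∈ ⟨γ_S(E_Δ)⟩}`, and left translation by `g⁻¹` identifies it with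
`Δ ×_{γ_S} ⟨γ_S(E_Δ)⟩`.
-/

theorem List.exists_eq_append_cons_append_cons_of_not_nodup_map {α β : Type*} (f : α → β)
    {l : List α} (h : ¬ (l.map f).Nodup) :
    ∃ a x b y c, l = a ++ x :: b ++ y :: c ∧ f x = f y := by
  induction l with
  | nil => exact absurd List.nodup_nil h
  | cons s rest ih =>
    rw [List.map_cons, List.nodup_cons, not_and_or, not_not] at h
    rcases h with hmem | hdup
    · obtain ⟨y, hy, hfy⟩ := List.exists_of_mem_map hmem
      obtain ⟨b, c, rfl⟩ := List.append_of_mem hy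
      exact ⟨[], s, b, y, c, rfl, hfy.symm⟩
    · obtain ⟨a, x, b, y, c, rfl, hf⟩ := ih hdup
      exact ⟨s :: a, x, b, y, c, rfl, hf⟩

namespace VG

section Walks

variable {Γ Δ' : MGraph}

theorem chain_append_iff {v : Γ.V} {l₁ l₂ : List (Γ.E × Bool)} :
    chain Γ v (l₁ ++ l₂) ↔ chain Γ v l₁ ∧ chain Γ (endOf Γ v l₁) l₂ := by
  induction l₁ generalizing v with
  | nil => simp [chain, endOf]
  | cons s rest ih => simp only [List.cons_append, chain, endOf, ih, and_assoc]

theorem vertsOf_eq_cons_map_stepTgt (v : Γ.V) (l : List (Γ.E × Bool)) :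
    vertsOf Γ v l = v :: l.map (stepTgt Γ) := by
  induction l generalizing v with
  | nil => rfl
  | cons s rest ih => rw [vertsOf, ih]; rfl

theorem vertsOf_eq_map_stepSrc_append {v : Γ.V} {l : List (Γ.E × Bool)} (h : chain Γ v l) :
    vertsOf Γ v l = l.map (stepSrc Γ) ++ [endOf Γ v l] := by
  induction l generalizing v with
  | nil => rfl
  | cons s rest ih => rw [vertsOf, ih h.2, ← h.1]; rfl

theorem Hom.chain_map_iff {φ : Hom Γ Δ'} (hφ : Function.Injective φ.onV) {v : Γ.V}
    {l : List (Γ.E × Bool)} : chain Δ' (φ.onV v) (l.map φ.mapStep) ↔ chain Γ v l := by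
  induction l generalizing v with
  | nil => exact Iff.rfl
  | cons s rest ih =>
    simp only [List.map_cons, chain, φ.stepSrc_map, φ.stepTgt_map, hφ.eq_iff, ih]

theorem Reachable.map (φ : Hom Γ Δ') {u v : Γ.V} (h : Reachable Γ u v) :
    Reachable Δ' (φ.onV u) (φ.onV v) := by
  obtain ⟨w, rfl, rfl⟩ := h
  exact ⟨w.map φ, rfl, endOf_map φ w.steps w.first⟩

theorem forall_mem_reverse_map_flipStep {p : Γ.E → Prop} {l : List (Γ.E × Bool)}
    (h : ∀ s ∈ l, p s.1) : ∀ s ∈ l.reverse.map flipStep, p s.1 := by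
  simp only [List.mem_map, List.mem_reverse]
  rintro _ ⟨t, ht, rfl⟩
  exact h t ht

end Walks

section Voltage

variable {Γ Δ' : MGraph} {G : Type*} [Group G]

def stepVoltage (γ : Γ.E → G) (s : Γ.E × Bool) : G := cond s.2 (γ s.1) (γ s.1)⁻¹

def listVoltage (γ : Γ.E → G) (l : List (Γ.E × Bool)) : G := (l.map (stepVoltage γ)).prod

@[simp]
theorem listVoltage_nil (γ : Γ.E → G) : listVoltage γ [] = 1 := rfl

@[simp]
theorem listVoltage_cons (γ : Γ.E → G) (s : Γ.E × Bool) (l : List (Γ.E × Bool)) :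
    listVoltage γ (s :: l) = stepVoltage γ s * listVoltage γ l :=
  List.prod_cons

@[simp]
theorem listVoltage_append (γ : Γ.E → G) (l₁ l₂ : List (Γ.E × Bool)) :
    listVoltage γ (l₁ ++ l₂) = listVoltage γ l₁ * listVoltage γ l₂ := by
  simp [listVoltage]

@[simp]
theorem stepVoltage_flipStep (γ : Γ.E → G) (s : Γ.E × Bool) :
    stepVoltage γ (flipStep s) = (stepVoltage γ s)⁻¹ := by
  obtain ⟨e, _ | _⟩ := s <;> simp [stepVoltage, flipStep]

theorem listVoltage_reverse_map_flipStep (γ : Γ.E → G) (l : List (Γ.E × Bool)) :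
    listVoltage γ (l.reverse.map flipStep) = (listVoltage γ l)⁻¹ := by
  induction l with
  | nil => simp
  | cons s rest ih =>
    rw [List.reverse_cons, List.map_append, listVoltage_append, ih]
    simp

theorem listVoltage_map_mapStep (φ : Hom Γ Δ') (γ : Δ'.E → G) (l : List (Γ.E × Bool)) :
    listVoltage γ (l.map φ.mapStep) = listVoltage (γ ∘ φ.onE) l := by
  induction l with
  | nil => rfl
  | cons s rest ih => simp only [List.map_cons, listVoltage_cons, ih]; rfl

theorem listVoltage_mem_closure (γ : Γ.E → G) (l : List (Γ.E × Bool)) :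
    listVoltage γ l ∈ Subgroup.closure (Set.range γ) := by
  induction l with
  | nil => exact one_mem _
  | cons s rest ih =>
    obtain ⟨e, b⟩ := s
    have he : γ e ∈ Subgroup.closure (Set.range γ) := Subgroup.subset_closure ⟨e, rfl⟩
    refine (listVoltage_cons γ _ rest).symm ▸ mul_mem ?_ ih
    cases b
    · exact inv_mem he
    · exact he

def TrivialVoltageConnected (γ : Γ.E → G) : Prop :=
  ∀ u w : Γ.V, ∃ l, chain Γ u l ∧ endOf Γ u l = w ∧ listVoltage γ l = 1

end Voltage

theorem voltage_eq_listVoltage {Γ : MGraph} {G : Type} [Group G] (γ : Γ.E → G) (w : Walk Γ) :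
    voltage γ w = listVoltage γ w.steps := rfl

section Acyclic

variable {Γ : MGraph}

/-- A closed walk without shorter closed subwalks visits each vertex once; acyclicity then forces a
repeated edge, which can only be a backtrack. -/
theorem Acyclic.eq_backtrack_of_forall_closed_infix (hac : Acyclic Γ) {v : Γ.V}
    {l : List (Γ.E × Bool)} (hch : chain Γ v l) (hcyc : endOf Γ v l = v) (hl : l ≠ [])
    (hmin : ∀ a b c, l = a ++ b ++ c → endOf Γ v a = endOf Γ v (a ++ b) → b = [] ∨ a ++ c = []) :
    ∃ s, l = [s, flipStep s] := by
  have src_eq : ∀ a x r, l = a ++ x :: r → stepSrc Γ x = endOf Γ v a := by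
    rintro a x r rfl
    exact (chain_append_iff.1 hch).2.1
  have tgt_eq : ∀ a x, stepTgt Γ x = endOf Γ v (a ++ [x]) := fun a x => by
    rw [endOf_append]; rfl
  have src_ne : ∀ a x b y c, l = a ++ x :: b ++ y :: c → stepSrc Γ x ≠ stepSrc Γ y := by
    intro a x b y c hsplit hxy
    rw [src_eq a x (b ++ y :: c) (by simp [hsplit]), src_eq (a ++ x :: b) y c hsplit] at hxy
    simpa using hmin a (x :: b) (y :: c) (by simp [hsplit]) (by simpa using hxy)
  have tgt_ne : ∀ a x b y c, l = a ++ x :: b ++ y :: c → stepTgt Γ x ≠ stepTgt Γ y := by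
    intro a x b y c hsplit hxy
    rw [tgt_eq a x, tgt_eq (a ++ x :: b) y] at hxy
    simpa using hmin (a ++ [x]) (b ++ [y]) c (by simp [hsplit]) (by simpa using hxy)
  by_cases hedges : (l.map Prod.fst).Nodup
  · refine absurd ⟨⟨v, l, hch⟩, hl, hcyc, hedges, ?_, ?_⟩ hac
    · rw [vertsOf_eq_map_stepSrc_append hch, List.dropLast_concat]
      by_contra hdup
      obtain ⟨a, x, b, y, c, hsplit, hxy⟩ :=
        List.exists_eq_append_cons_append_cons_of_not_nodup_map _ hdup
      exact src_ne a x b y c hsplit hxy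
    · rw [vertsOf_eq_cons_map_stepTgt, List.tail_cons]
      by_contra hdup
      obtain ⟨a, x, b, y, c, hsplit, hxy⟩ :=
        List.exists_eq_append_cons_append_cons_of_not_nodup_map _ hdup
      exact tgt_ne a x b y c hsplit hxy
  obtain ⟨a, x, b, y, c, hsplit, hxy⟩ :=
    List.exists_eq_append_cons_append_cons_of_not_nodup_map _ hedges
  by_cases hdir : x.2 = y.2
  · exact absurd (congrArg (stepSrc Γ) (Prod.ext hxy hdir)) (src_ne a x b y c hsplit)
  have hy : y = flipStep x := Prod.ext hxy.symm (Bool.eq_not_of_ne (Ne.symm hdir))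
  have hb : b = [] := by
    have htgt := src_eq (a ++ x :: b) y c hsplit
    rw [hy, stepSrc_flip, tgt_eq a x] at htgt
    simpa using hmin (a ++ [x]) b (y :: c) (by simp [hsplit]) (by simpa using htgt)
  subst hb
  have hsrc := src_eq a x (y :: c) (by simp [hsplit])
  rw [← stepTgt_flip, ← hy, tgt_eq (a ++ [x]) y] at hsrc
  obtain ⟨rfl, rfl⟩ : a = [] ∧ c = [] := by
    simpa using hmin a [x, y] c (by simp [hsplit]) (by simpa using hsrc.symm)
  exact ⟨x, by simpa [hy] using hsplit⟩

theorem Acyclic.listVoltage_eq_one {G : Type*} [Group G] (hac : Acyclic Γ) (γ : Γ.E → G)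
    {v : Γ.V} {l : List (Γ.E × Bool)} (hch : chain Γ v l) (hcyc : endOf Γ v l = v) :
    listVoltage γ l = 1 := by
  induction hn : l.length using Nat.strong_induction_on generalizing l v with
  | _ n ih =>
  by_cases hsplit : ∃ a b c, l = a ++ b ++ c ∧ endOf Γ v a = endOf Γ v (a ++ b) ∧
      b ≠ [] ∧ a ++ c ≠ []
  · obtain ⟨a, b, c, rfl, hab, hb, hout⟩ := hsplit
    rw [chain_append_iff, chain_append_iff, ← hab] at hch
    obtain ⟨⟨hcha, hchb⟩, hchc⟩ := hch
    have hb_pos := List.length_pos_iff.2 hb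
    have hout_pos := List.length_pos_iff.2 hout
    simp only [List.length_append] at hn hout_pos
    have hb1 : listVoltage γ b = 1 :=
      ih b.length (by omega) hchb (by rw [← endOf_append, hab]) rfl
    have hac1 : listVoltage γ (a ++ c) = 1 :=
      ih (a ++ c).length (by simp only [List.length_append]; omega)
        (chain_append_iff.2 ⟨hcha, hchc⟩) (by rw [endOf_append, hab, ← endOf_append, hcyc]) rfl
    rw [listVoltage_append, listVoltage_append, hb1, mul_one, ← listVoltage_append, hac1]
  · rcases eq_or_ne l [] with rfl | hl
    · rfl
    obtain ⟨s, rfl⟩ := hac.eq_backtrack_of_forall_closed_infix hch hcyc hl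
      fun a b c habc hab => by
        by_contra! h
        exact hsplit ⟨a, b, c, habc, hab, h⟩
    simp

end Acyclic

namespace IsSpanningTreeSet

variable {Δ : MGraph} {S : Set Δ.E} {G : Type*} [Group G]

theorem listVoltage_eq_one (hS : IsSpanningTreeSet Δ S) (γ : Δ.E → G) {v : Δ.V}
    {l : List (Δ.E × Bool)} (hlS : ∀ s ∈ l, s.1 ∈ S) (hch : chain Δ v l)
    (hcyc : endOf Δ v l = v) : listVoltage γ l = 1 := by
  set T := edgeInduced Δ S
  let l' : List (T.toMGraph.E × Bool) := l.pmap (fun s hs => (⟨s.1, hs⟩, s.2)) hlS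
  have hl' : l'.map T.incl.mapStep = l := by
    simp [l', List.map_pmap, Hom.mapStep, Subgraph.incl]
  have hv : v ∈ T.verts := hS.2.2 v
  rw [← hl', listVoltage_map_mapStep]
  refine hS.1.listVoltage_eq_one _ (v := ⟨v, hv⟩)
    ((T.incl.chain_map_iff Subtype.val_injective).1 (hl' ▸ hch)) (Subtype.val_injective ?_)
  exact (endOf_map T.incl l' ⟨v, hv⟩).symm.trans (hl' ▸ hcyc)

theorem listVoltage_eq (hS : IsSpanningTreeSet Δ S) (γ : Δ.E → G) {u : Δ.V}
    {l₁ l₂ : List (Δ.E × Bool)} (h₁S : ∀ s ∈ l₁, s.1 ∈ S) (h₂S : ∀ s ∈ l₂, s.1 ∈ S)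
    (h₁ : chain Δ u l₁) (h₂ : chain Δ u l₂) (hend : endOf Δ u l₁ = endOf Δ u l₂) :
    listVoltage γ l₁ = listVoltage γ l₂ := by
  have hloop := hS.listVoltage_eq_one γ (l := l₁ ++ l₂.reverse.map flipStep) (v := u)
    (fun s hs => (List.mem_append.1 hs).elim (h₁S s) (forall_mem_reverse_map_flipStep h₂S s))
    (chain_append_iff.2 ⟨h₁, hend ▸ chain_reverse Δ l₂ u h₂⟩)
    (by rw [endOf_append, hend, endOf_reverse Δ l₂ u h₂])
  rwa [listVoltage_append, listVoltage_reverse_map_flipStep, mul_inv_eq_one] at hloop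

theorem exists_chain (hS : IsSpanningTreeSet Δ S) (u v : Δ.V) :
    ∃ l : List (Δ.E × Bool), (∀ s ∈ l, s.1 ∈ S) ∧ chain Δ u l ∧ endOf Δ u l = v := by
  obtain ⟨w, hw₁, hw₂⟩ := hS.2.1 ⟨u, hS.2.2 u⟩ ⟨v, hS.2.2 v⟩
  refine ⟨(w.map (edgeInduced Δ S).incl).steps, ?_, ?_, ?_⟩
  · simp only [Walk.map, List.mem_map]
    rintro _ ⟨t, -, rfl⟩
    exact t.1.2
  · simpa [Walk.map, Subgraph.incl, hw₁] using (w.map (edgeInduced Δ S).incl).ok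
  · have h := endOf_map (edgeInduced Δ S).incl w.steps w.first
    rw [show endOf _ w.first w.steps = w.last from rfl, hw₂, hw₁] at h
    exact h

theorem trivialVoltageConnected (hS : IsSpanningTreeSet Δ S) {c : Δ.E → G}
    (hc : ∀ e ∈ S, c e = 1) :
    TrivialVoltageConnected c := by
  intro u w
  obtain ⟨l, hlS, hch, hend⟩ := hS.exists_chain u w
  refine ⟨l, hch, hend, List.prod_eq_one fun g hg => ?_⟩
  obtain ⟨⟨e, b⟩, hs, rfl⟩ := List.mem_map.1 hg
  cases b <;> simp [stepVoltage, hc e (hlS _ hs)]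

end IsSpanningTreeSet

theorem IsCondensation.exists_gauge {Δ : MGraph} {G : Type} [Group G] {γ γS : Δ.E → G}
    {S : Set Δ.E} {v₀ : Δ.V} (hcond : IsCondensation γ S v₀ γS) (hS : IsSpanningTreeSet Δ S) :
    ∃ f : Δ.V → G, ∀ e, γS e = f (Δ.ι e) * γ e * (f (Δ.τ e))⁻¹ := by
  choose L hLS hLc hLe using hS.exists_chain v₀
  refine ⟨fun w => listVoltage γ (L w), fun e => ?_⟩
  by_cases he : e ∈ S
  · have hstep : listVoltage γ (L (Δ.ι e) ++ [(e, true)]) = listVoltage γ (L (Δ.τ e)) :=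
      hS.listVoltage_eq γ (fun s hs => (List.mem_append.1 hs).elim (hLS _ s)
          fun h => (List.mem_singleton.1 h).symm ▸ he) (hLS _)
        (chain_append_iff.2 ⟨hLc _, by rw [hLe]; exact ⟨rfl, trivial⟩⟩) (hLc _)
        (by rw [endOf_append, hLe, hLe]; rfl)
    beta_reduce
    rw [hcond.1 e he, ← hstep, listVoltage_append]
    simp [stepVoltage]
  · obtain ⟨⟨u₁, l₁, hl₁⟩, ⟨u₂, l₂, hl₂⟩, rfl, hι, rfl, hv₀, -, -, h₁S, h₂S, heq⟩ :=
      hcond.2 e he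
    have h₁ : listVoltage γ l₁ = listVoltage γ (L (Δ.ι e)) :=
      hS.listVoltage_eq γ h₁S (hLS _) hl₁ (hLc _) (hι.trans (hLe _).symm)
    have h₂ : listVoltage γ l₂ = (listVoltage γ (L (Δ.τ e)))⁻¹ := by
      have hrev := chain_reverse Δ _ _ (hLc (Δ.τ e))
      have hrev_end := endOf_reverse Δ _ _ (hLc (Δ.τ e))
      rw [hLe] at hrev hrev_end
      rw [← listVoltage_reverse_map_flipStep]
      exact hS.listVoltage_eq γ h₂S (forall_mem_reverse_map_flipStep (hLS _)) hl₂ hrev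
        (hv₀.trans hrev_end.symm)
    rw [heq, voltage_eq_listVoltage, voltage_eq_listVoltage]
    exact congrArg₂ (· * γ e * ·) h₁ h₂

section DerivedGraph

variable {Δ : MGraph} {K : Type} [Group K] (c : Δ.E → K)

theorem derivedGraph_stepTgt_snd (s : (derivedGraph Δ c).E × Bool) :
    (stepTgt (derivedGraph Δ c) s).2 =
      (stepSrc (derivedGraph Δ c) s).2 * stepVoltage c ((derivedProj Δ c).mapStep s) := by
  obtain ⟨⟨e, k⟩, _ | _⟩ := s <;> simp [stepTgt, stepSrc, derivedGraph, stepVoltage, Hom.mapStep,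
    derivedProj]

theorem derivedGraph_endOf_snd {p : (derivedGraph Δ c).V} {l : List ((derivedGraph Δ c).E × Bool)}
    (h : chain (derivedGraph Δ c) p l) :
    (endOf (derivedGraph Δ c) p l).2 = p.2 * listVoltage c (l.map (derivedProj Δ c).mapStep) := by
  induction l generalizing p with
  | nil => simp [endOf]
  | cons s rest ih =>
    rw [endOf, ih h.2, derivedGraph_stepTgt_snd, h.1, List.map_cons, listVoltage_cons, mul_assoc]

theorem Reachable.derivedGraph_inv_mul_mem_closure {p q : (derivedGraph Δ c).V}
    (h : Reachable (derivedGraph Δ c) p q) : p.2⁻¹ * q.2 ∈ Subgroup.closure (Set.range c) := by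
  obtain ⟨w, rfl, rfl⟩ := h
  rw [Walk.last, derivedGraph_endOf_snd c w.ok, inv_mul_cancel_left]
  exact listVoltage_mem_closure _ _

theorem reachable_derivedGraph_step (s : Δ.E × Bool) (k : K) :
    Reachable (derivedGraph Δ c) (stepSrc Δ s, k) (stepTgt Δ s, k * stepVoltage c s) := by
  obtain ⟨e, _ | _⟩ := s
  · refine ⟨⟨(Δ.τ e, k), [((e, k * (c e)⁻¹), false)], ⟨?_, trivial⟩⟩, rfl, rfl⟩
    simp [stepSrc, derivedGraph]
  · exact ⟨⟨(Δ.ι e, k), [((e, k), true)], ⟨rfl, trivial⟩⟩, rfl, rfl⟩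

theorem reachable_derivedGraph_of_chain {v : Δ.V} {l : List (Δ.E × Bool)} (h : chain Δ v l)
    (k : K) : Reachable (derivedGraph Δ c) (v, k) (endOf Δ v l, k * listVoltage c l) := by
  induction l generalizing v k with
  | nil => simpa [endOf] using Reachable.refl' _ _
  | cons s rest ih =>
    rw [listVoltage_cons, ← mul_assoc]
    exact (h.1 ▸ reachable_derivedGraph_step c s k).trans (ih h.2 _)

variable {c} in
theorem reachable_derivedGraph_mul_of_mem_closure (hjoin : TrivialVoltageConnected c) {h : K}
    (hh : h ∈ Subgroup.closure (Set.range c)) (u w : Δ.V) (k : K) :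
    Reachable (derivedGraph Δ c) (u, k) (w, k * h) := by
  have hlevel : ∀ u w k, Reachable (derivedGraph Δ c) (u, k) (w, k) := fun u w k => by
    obtain ⟨l, hch, rfl, hl⟩ := hjoin u w
    simpa [hl] using reachable_derivedGraph_of_chain c hch k
  induction hh using Subgroup.closure_induction generalizing u w k with
  | mem x hx =>
    obtain ⟨e, rfl⟩ := hx
    exact ((hlevel u (Δ.ι e) k).trans (reachable_derivedGraph_step c (e, true) k)).trans
      (hlevel _ w _)
  | one => simpa using hlevel u w k
  | mul x y _ _ hx hy => simpa [mul_assoc] using (hx u u k).trans (hy u w (k * x))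
  | inv x _ hx => simpa using (hx w u (k * x⁻¹)).symm'

end DerivedGraph

namespace Iso

variable {Γ₁ Γ₂ Γ₃ : MGraph}

def symm (φ : Iso Γ₁ Γ₂) : Iso Γ₂ Γ₁ where
  onV := φ.onV.symm
  onE := φ.onE.symm
  map_ι e := by rw [φ.onV.eq_symm_apply, ← φ.map_ι, Equiv.apply_symm_apply]
  map_τ e := by rw [φ.onV.eq_symm_apply, ← φ.map_τ, Equiv.apply_symm_apply]

def trans (φ : Iso Γ₁ Γ₂) (ψ : Iso Γ₂ Γ₃) : Iso Γ₁ Γ₃ where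
  onV := φ.onV.trans ψ.onV
  onE := φ.onE.trans ψ.onE
  map_ι e := by simp only [Equiv.trans_apply, ψ.map_ι, φ.map_ι]
  map_τ e := by simp only [Equiv.trans_apply, ψ.map_τ, φ.map_τ]

theorem reachable_iff (φ : Iso Γ₁ Γ₂) {u v : Γ₁.V} :
    Reachable Γ₂ (φ.onV u) (φ.onV v) ↔ Reachable Γ₁ u v := by
  refine ⟨fun h => ?_, Reachable.map φ.toHom⟩
  simpa [symm, toHom] using h.map φ.symm.toHom

def componentOf (φ : Iso Γ₁ Γ₂) (x : Γ₁.V) :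
    Iso (VG.componentOf Γ₁ x).toMGraph (VG.componentOf Γ₂ (φ.onV x)).toMGraph where
  onV := φ.onV.subtypeEquiv fun _ => φ.reachable_iff.symm
  onE := φ.onE.subtypeEquiv fun e => by
    show Reachable Γ₁ x (Γ₁.ι e) ↔ Reachable Γ₂ (φ.onV x) (Γ₂.ι (φ.onE e))
    rw [φ.map_ι, φ.reachable_iff]
  map_ι e := Subtype.ext (φ.map_ι e.1)
  map_τ e := Subtype.ext (φ.map_τ e.1)

end Iso

section DerivedGraphIso

variable {Δ : MGraph} {K : Type} [Group K]

def derivedGraphIsoOfGauge {c c' : Δ.E → K} (f : Δ.V → K)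
    (hf : ∀ e, c' e = f (Δ.ι e) * c e * (f (Δ.τ e))⁻¹) :
    Iso (derivedGraph Δ c) (derivedGraph Δ c') where
  onV := (Equiv.refl _).prodShear fun v => Equiv.mulRight (f v)⁻¹
  onE := (Equiv.refl _).prodShear fun e => Equiv.mulRight (f (Δ.ι e))⁻¹
  map_ι _ := rfl
  map_τ e := Prod.ext rfl <| by
    show e.2 * (f (Δ.ι e.1))⁻¹ * c' e.1 = e.2 * c e.1 * (f (Δ.τ e.1))⁻¹
    rw [hf]
    group

def componentIsoDerivedGraphClosure (c : Δ.E → K) (hjoin : TrivialVoltageConnected c)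
    (y : (derivedGraph Δ c).V) :
    Iso (componentOf (derivedGraph Δ c) y).toMGraph (derivedGraph Δ (restrictToClosure c)) where
  onV :=
    { toFun := fun p => (p.1.1, ⟨y.2⁻¹ * p.1.2, p.2.derivedGraph_inv_mul_mem_closure c⟩)
      invFun := fun q =>
        ⟨(q.1, y.2 * q.2), reachable_derivedGraph_mul_of_mem_closure hjoin q.2.2 _ _ _⟩
      left_inv := fun _ => Subtype.ext (Prod.ext rfl (mul_inv_cancel_left _ _))
      right_inv := fun _ => Prod.ext rfl (Subtype.ext (inv_mul_cancel_left _ _)) }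
  onE :=
    { toFun := fun p => (p.1.1, ⟨y.2⁻¹ * p.1.2, p.2.derivedGraph_inv_mul_mem_closure c⟩)
      invFun := fun q =>
        ⟨(q.1, y.2 * q.2), reachable_derivedGraph_mul_of_mem_closure hjoin q.2.2 _ _ _⟩
      left_inv := fun _ => Subtype.ext (Prod.ext rfl (mul_inv_cancel_left _ _))
      right_inv := fun _ => Prod.ext rfl (Subtype.ext (inv_mul_cancel_left _ _)) }
  map_ι _ := rfl
  map_τ _ := Prod.ext rfl (Subtype.ext (mul_assoc _ _ _))

end DerivedGraphIso

theorem component_iso_condensed_derived_general {Δ : MGraph} {G : Type} [Group G]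
    (γ : Δ.E → G)
    (x : (derivedGraph Δ γ).V)
    (S : Set Δ.E) (hS : IsSpanningTreeSet Δ S) (v₀ : Δ.V)
    (γS : Δ.E → G) (hcond : IsCondensation γ S v₀ γS) :
    Nonempty (Iso (componentOf (derivedGraph Δ γ) x).toMGraph
      (derivedGraph Δ (restrictToClosure γS))) := by
  obtain ⟨f, hf⟩ := hcond.exists_gauge hS
  exact ⟨((derivedGraphIsoOfGauge f hf).componentOf x).trans
    (componentIsoDerivedGraphClosure γS (hS.trivialVoltageConnected hcond.1) _)⟩

/-- Let `(Δ, γ)` be a connected voltage graph whose voltages generate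
the group `G`.  For any connected component `Γ₀` of `Δ ×_γ G`, any spanning tree set
`S` of `Δ` and any base vertex `v₀`, the condensation `γ_S` of `γ` satisfies
`Γ₀ ≅ Δ ×_{γ_S} ⟨γ_S(E_Δ)⟩`. -/
theorem component_iso_condensed_derived {Δ : MGraph} {G : Type} [Group G]
    (γ : Δ.E → G) (hΔ : Connected Δ)
    (hgen : Subgroup.closure (Set.range γ) = ⊤)
    (x : (derivedGraph Δ γ).V)
    (S : Set Δ.E) (hS : IsSpanningTreeSet Δ S) (v₀ : Δ.V)
    (γS : Δ.E → G) (hcond : IsCondensation γ S v₀ γS) :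
    Nonempty (Iso (componentOf (derivedGraph Δ γ) x).toMGraph
      (derivedGraph Δ (restrictToClosure γS))) :=
  component_iso_condensed_derived_general γ x S hS v₀ γS hcond

end VG
end
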